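/- arXiv:2208.11452 — 3 statements merged into one kernel-verified Lean document; each statement's English description precedes it below -/
import Mathlib

section
/- Let ω be a normal weight on [0,1), μ a positive Borel measure on [0,1), and α > -1. If the operator I_{μ,α+1}(f)(z) = ∫_0^1 f(t)/(1-tz)^{α+1} dμ(t) is well defined (finite) at z = 0 for every f ∈ B_ω, then ∫_0^1 (ω̃(t) + 1) dμ(t) < ∞, where ω̃(t) = ∫_0^t ds/ω(s). -/
open MeasureTheory Set Filter

/-- `g` is almost decreasing on `s`. -/
def AlmostDecreasingOn (g : ℝ → ℝ) (s : Set ℝ) : Prop :=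
  ∃ C > 0, ∀ x ∈ s, ∀ y ∈ s, x < y → g y ≤ C * g x

/-- `g` is almost increasing on `s`. -/
def AlmostIncreasingOn (g : ℝ → ℝ) (s : Set ℝ) : Prop :=
  ∃ C > 0, ∀ x ∈ s, ∀ y ∈ s, x < y → g x ≤ C * g y

/-- `ν` is a normal weight on `[0,1)` with exponents `a ≤ b`. -/
def IsNormal (ν : ℝ → ℝ) (a b : ℝ) : Prop :=
  0 < a ∧ a ≤ b ∧ (∀ s ∈ Ico (0:ℝ) 1, 0 < ν s) ∧ ContinuousOn ν (Ico 0 1) ∧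
  AlmostDecreasingOn (fun s => ν s / (1 - s ^ 2) ^ a) (Ico 0 1) ∧
  AlmostIncreasingOn (fun s => ν s / (1 - s ^ 2) ^ b) (Ico 0 1)

/-- Membership in the normal-weight Bloch space `B_ν`. -/
def MemBloch (ν : ℝ → ℝ) (f : ℂ → ℂ) : Prop :=
  DifferentiableOn ℂ f (Metric.ball 0 1) ∧
  BddAbove (Set.range fun z : Metric.ball (0:ℂ) 1 => ν ‖(z : ℂ)‖ * ‖deriv f z‖)

/-- The Bloch norm `|f(0)| + sup ν(|z|)|f'(z)|`. -/
noncomputable def blochNorm (ν : ℝ → ℝ) (f : ℂ → ℂ) : ℝ :=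
  ‖f 0‖ + ⨆ z : Metric.ball (0:ℂ) 1, ν ‖(z : ℂ)‖ * ‖deriv f z‖

/-- `ω̃(t) = ∫_0^t ds/ω(s)`. -/
noncomputable def tildeW (ω : ℝ → ℝ) (t : ℝ) : ℝ := ∫ s in (0:ℝ)..t, 1 / ω s

/-- The generalized integral type Hilbert operator `I_{μ,α+1}`. -/
noncomputable def intHilbert (μ : Measure ℝ) (α : ℝ) (f : ℂ → ℂ) (z : ℂ) : ℂ :=
  ∫ t in Ico (0:ℝ) 1, f (t : ℂ) / (1 - (t : ℂ) * z) ^ ((α : ℂ) + 1) ∂μ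

/-- The sublinear generalized integral type Hilbert operator. -/
noncomputable def tildeIntHilbert (μ : Measure ℝ) (α : ℝ) (f : ℂ → ℂ) (z : ℂ) : ℂ :=
  ∫ t in Ico (0:ℝ) 1, (‖f (t : ℂ)‖ : ℂ) / (1 - (t : ℂ) * z) ^ ((α : ℂ) + 1) ∂μ

/-- Boundedness of an operator from `B_{ν₁}` to `B_{ν₂}`. -/
def IsBddOp (ν₁ ν₂ : ℝ → ℝ) (T : (ℂ → ℂ) → ℂ → ℂ) : Prop :=
  ∃ C > 0, ∀ f, MemBloch ν₁ f → MemBloch ν₂ (T f) ∧ blochNorm ν₂ (T f) ≤ C * blochNorm ν₁ f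

/-- Compactness of an operator from `B_{ν₁}` to `B_{ν₂}` (sequential characterization). -/
def IsCompactOp (ν₁ ν₂ : ℝ → ℝ) (T : (ℂ → ℂ) → ℂ → ℂ) : Prop :=
  IsBddOp ν₁ ν₂ T ∧
  ∀ (h : ℕ → ℂ → ℂ) (M : ℝ), (∀ k, MemBloch ν₁ (h k) ∧ blochNorm ν₁ (h k) ≤ M) →
    TendstoLocallyUniformlyOn (fun k z => h k z) (fun _ => 0) atTop (Metric.ball (0:ℂ) 1) →
    Tendsto (fun k => blochNorm ν₂ (T (h k))) atTop (nhds 0)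

open Topology

/-!
Let `r_n = 1 - 2⁻ⁿ` and let `g(z) = ∑ₙ z^(2ⁿ - 1) / ω(r_n)`, a lacunary series whose primitive
`F(z) = ∑ₙ z^(2ⁿ) / (2ⁿ ω(r_n))` vanishes at `0`. For `r_N ≤ ρ < r_{N+1}`, normality of `ω`
gives `ω(ρ) / ω(r_n) ≲ 2^(-a (N - n))` for `n ≤ N`, a geometric series, and
`ω(ρ) / ω(r_n) ≲ 2^(b (n - N))` for `n > N`, which is beaten by
`ρ^(2ⁿ - 1) ≤ exp(-2^(n - N - 1) / 2)`. Hence `ω(|z|) |g(z)|` is bounded and `F ∈ B_ω`.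
Conversely the single term `n = N` gives `g(s) ≳ 1 / ω(s)` on `[0, 1)`, so
`ω̃(t) ≲ Re F(t) ≤ |F(t)|`, and the integrability of `F` and of `1` on `[0, 1)` dominates `ω̃ + 1`.
-/

lemma summable_pow_mul_pow_two_pow {p x : ℝ} (hp : 0 ≤ p) (hx : 0 ≤ x) (hx1 : x < 1) :
    Summable fun j : ℕ => p ^ j * x ^ 2 ^ j := by
  have hlim : Tendsto (fun j : ℕ => p * x ^ 2 ^ j) atTop (𝓝 0) := by
    simpa using ((tendsto_pow_atTop_nhds_zero_of_lt_one hx hx1).comp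
      (tendsto_pow_atTop_atTop_of_one_lt one_lt_two)).const_mul p
  refine summable_of_ratio_norm_eventually_le (r := 1 / 2) (by norm_num) ?_
  filter_upwards [hlim.eventually_le_const (by norm_num : (0 : ℝ) < 1 / 2)] with j hj
  rw [Real.norm_of_nonneg (by positivity), Real.norm_of_nonneg (by positivity)]
  calc p ^ (j + 1) * x ^ 2 ^ (j + 1) = p * x ^ 2 ^ j * (p ^ j * x ^ 2 ^ j) := by ring
    _ ≤ 1 / 2 * (p ^ j * x ^ 2 ^ j) := by gcongr

noncomputable def dyadicPoint (n : ℕ) : ℝ := 1 - (2 ^ n)⁻¹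

lemma one_sub_dyadicPoint (n : ℕ) : 1 - dyadicPoint n = (2 ^ n)⁻¹ := sub_sub_cancel 1 _

lemma dyadicPoint_mem_Ico (n : ℕ) : dyadicPoint n ∈ Ico (0 : ℝ) 1 := by
  refine ⟨?_, ?_⟩
  · rw [dyadicPoint, sub_nonneg]
    exact inv_le_one_of_one_le₀ (one_le_pow₀ one_le_two)
  · rw [dyadicPoint, sub_lt_self_iff]
    positivity

lemma dyadicPoint_mono : Monotone dyadicPoint := fun _ _ hmn => by
  unfold dyadicPoint
  gcongr
  norm_num

lemma exists_dyadicPoint_le_lt {s : ℝ} (hs : s ∈ Ico (0 : ℝ) 1) :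
    ∃ N, dyadicPoint N ≤ s ∧ s < dyadicPoint (N + 1) := by
  have hs' : 0 < 1 - s := sub_pos.2 hs.2
  obtain ⟨N, hN, hN'⟩ := exists_nat_pow_near (one_le_inv₀ hs' |>.2 (by linarith [hs.1]))
    one_lt_two
  refine ⟨N, ?_, ?_⟩
  · have := (le_inv_comm₀ (by positivity) hs').1 hN
    rw [dyadicPoint]
    linarith
  · have := (inv_lt_comm₀ hs' (by positivity)).1 hN'
    rw [dyadicPoint]
    linarith

lemma one_sub_dyadicPoint_rpow (c : ℝ) (n : ℕ) :
    (1 - dyadicPoint n) ^ c = (((2 : ℝ) ^ c) ^ n)⁻¹ := by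
  rw [one_sub_dyadicPoint, Real.inv_rpow (by positivity), Real.rpow_pow_comm zero_le_two]

lemma one_sub_rpow_le_of_dyadicPoint_le {c ρ : ℝ} {N : ℕ} (hc : 0 ≤ c) (hρ : ρ ≤ 1)
    (hN : dyadicPoint N ≤ ρ) : (1 - ρ) ^ c ≤ (((2 : ℝ) ^ c) ^ N)⁻¹ := by
  rw [← one_sub_dyadicPoint_rpow]
  exact Real.rpow_le_rpow (sub_nonneg.2 hρ) (by linarith) hc

lemma quarter_le_dyadicPoint_pow (N : ℕ) : 1 / 4 ≤ dyadicPoint N ^ (2 ^ N - 1) := by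
  rcases N with _ | k
  · norm_num
  have hbern := one_add_mul_le_pow (a := -((2:ℝ) ^ (k + 1))⁻¹) (by
    have : ((2:ℝ) ^ (k + 1))⁻¹ ≤ 1 := inv_le_one_of_one_le₀ (one_le_pow₀ one_le_two)
    linarith) (2 ^ k)
  have hhalf : 1 + ((2 ^ k : ℕ) : ℝ) * -((2:ℝ) ^ (k + 1))⁻¹ = 1 / 2 := by
    push_cast; rw [pow_succ]; field_simp; ring
  rw [hhalf, ← sub_eq_add_neg] at hbern
  have hr := dyadicPoint_mem_Ico (k + 1)
  calc (1 : ℝ) / 4 = (1 / 2) ^ 2 := by norm_num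
    _ ≤ (dyadicPoint (k + 1) ^ 2 ^ k) ^ 2 := by gcongr; exact hbern
    _ = dyadicPoint (k + 1) ^ 2 ^ (k + 1) := by rw [← pow_mul, pow_succ]
    _ ≤ dyadicPoint (k + 1) ^ (2 ^ (k + 1) - 1) :=
      pow_le_pow_of_le_one hr.1 hr.2.le (Nat.sub_le _ _)

lemma dyadicPoint_pow_le_exp {ρ : ℝ} {N : ℕ} (hρ : 0 ≤ ρ) (hρN : ρ < dyadicPoint (N + 1))
    (j : ℕ) : ρ ^ (2 ^ (j + (N + 1)) - 1) ≤ Real.exp (-1 / 2) ^ 2 ^ j := by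
  have hr := dyadicPoint_mem_Ico (N + 1)
  have hexp : 2 ^ (j + N) ≤ 2 ^ (j + (N + 1)) - 1 := by
    have : 1 ≤ 2 ^ (j + N) := Nat.one_le_two_pow
    rw [← add_assoc, pow_succ]
    omega
  calc ρ ^ (2 ^ (j + (N + 1)) - 1) ≤ ρ ^ 2 ^ (j + N) :=
        pow_le_pow_of_le_one hρ (hρN.trans hr.2).le hexp
    _ ≤ Real.exp (-((2:ℝ) ^ (N + 1))⁻¹) ^ 2 ^ (j + N) := by
        gcongr
        exact hρN.le.trans (Real.one_sub_le_exp_neg _)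
    _ = Real.exp (-1 / 2) ^ 2 ^ j := by
        rw [← Real.exp_nat_mul, ← Real.exp_nat_mul]
        congr 1
        push_cast
        rw [pow_add, pow_succ]
        field_simp

lemma AlmostDecreasingOn.exists_le_mul_of_le {g : ℝ → ℝ} {s : Set ℝ}
    (hg : AlmostDecreasingOn g s) (hg0 : ∀ x ∈ s, 0 ≤ g x) :
    ∃ C > 0, ∀ x ∈ s, ∀ y ∈ s, x ≤ y → g y ≤ C * g x := by
  obtain ⟨C, -, hC⟩ := hg
  refine ⟨max C 1, by positivity, fun x hx y hy hxy => ?_⟩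
  rcases hxy.lt_or_eq with hlt | rfl
  · exact (hC x hx y hy hlt).trans (mul_le_mul_of_nonneg_right (le_max_left _ _) (hg0 x hx))
  · exact le_mul_of_one_le_left (hg0 x hx) (le_max_right _ _)

lemma AlmostIncreasingOn.exists_le_mul_of_le {g : ℝ → ℝ} {s : Set ℝ}
    (hg : AlmostIncreasingOn g s) (hg0 : ∀ x ∈ s, 0 ≤ g x) :
    ∃ C > 0, ∀ x ∈ s, ∀ y ∈ s, x ≤ y → g x ≤ C * g y := by
  obtain ⟨C, -, hC⟩ := hg
  refine ⟨max C 1, by positivity, fun x hx y hy hxy => ?_⟩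
  rcases hxy.lt_or_eq with hlt | rfl
  · exact (hC x hx y hy hlt).trans (mul_le_mul_of_nonneg_right (le_max_left _ _) (hg0 y hy))
  · exact le_mul_of_one_le_left (hg0 x hx) (le_max_right _ _)

lemma one_sub_sq_pos {x : ℝ} (hx : x ∈ Ico (0 : ℝ) 1) : 0 < 1 - x ^ 2 := by
  nlinarith [hx.1, hx.2]

lemma mul_one_sub_rpow_le_of_div_le {u v C c x y : ℝ} (hx : x ∈ Ico (0 : ℝ) 1)
    (hy : y ∈ Ico (0 : ℝ) 1) (hc : 0 ≤ c) (hu : 0 ≤ u) (hCv : 0 ≤ C * v)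
    (h : u / (1 - y ^ 2) ^ c ≤ C * (v / (1 - x ^ 2) ^ c)) :
    u * (1 - x) ^ c ≤ 2 ^ c * C * v * (1 - y) ^ c := by
  have hx2 := Real.rpow_pos_of_pos (one_sub_sq_pos hx) c
  have hy2 := Real.rpow_pos_of_pos (one_sub_sq_pos hy) c
  have hy1 : 0 ≤ 1 - y := by linarith [hy.2]
  calc u * (1 - x) ^ c ≤ u * (1 - x ^ 2) ^ c := by
        gcongr
        · linarith [hx.2]
        · nlinarith [hx.1, hx.2]
    _ = u / (1 - y ^ 2) ^ c * (1 - x ^ 2) ^ c * (1 - y ^ 2) ^ c := by field_simp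
    _ ≤ C * (v / (1 - x ^ 2) ^ c) * (1 - x ^ 2) ^ c * (1 - y ^ 2) ^ c := by gcongr
    _ = C * v * (1 - y ^ 2) ^ c := by field_simp
    _ ≤ C * v * (2 * (1 - y)) ^ c := by
        gcongr
        · exact (one_sub_sq_pos hy).le
        · nlinarith [hy.1, hy.2]
    _ = 2 ^ c * C * v * (1 - y) ^ c := by rw [Real.mul_rpow zero_le_two hy1]; ring

lemma IsNormal.exists_decreasing_comparison {ω : ℝ → ℝ} {a b : ℝ} (hω : IsNormal ω a b) :
    ∃ K > 0, ∀ x ∈ Ico (0 : ℝ) 1, ∀ y ∈ Ico (0 : ℝ) 1, x ≤ y →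
      ω y * (1 - x) ^ a ≤ K * ω x * (1 - y) ^ a := by
  obtain ⟨ha, -, hpos, -, hdec, -⟩ := hω
  obtain ⟨C, hC, h⟩ := hdec.exists_le_mul_of_le fun x hx =>
    div_nonneg (hpos x hx).le (Real.rpow_nonneg (one_sub_sq_pos hx).le a)
  refine ⟨2 ^ a * C, by positivity, fun x hx y hy hxy => ?_⟩
  exact mul_one_sub_rpow_le_of_div_le hx hy ha.le (hpos y hy).le
    (mul_nonneg hC.le (hpos x hx).le) (h x hx y hy hxy)

lemma IsNormal.exists_increasing_comparison {ω : ℝ → ℝ} {a b : ℝ} (hω : IsNormal ω a b) :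
    ∃ K > 0, ∀ x ∈ Ico (0 : ℝ) 1, ∀ y ∈ Ico (0 : ℝ) 1, x ≤ y →
      ω x * (1 - y) ^ b ≤ K * ω y * (1 - x) ^ b := by
  obtain ⟨ha, hab, hpos, -, -, hinc⟩ := hω
  obtain ⟨C, hC, h⟩ := hinc.exists_le_mul_of_le fun x hx =>
    div_nonneg (hpos x hx).le (Real.rpow_nonneg (one_sub_sq_pos hx).le b)
  refine ⟨2 ^ b * C, by positivity, fun x hx y hy hxy => ?_⟩
  exact mul_one_sub_rpow_le_of_div_le hy hx (ha.le.trans hab) (hpos x hx).le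
    (mul_nonneg hC.le (hpos y hy).le) (h x hx y hy hxy)

section Lacunary

variable {c : ℕ → ℝ}

noncomputable def lacunarySum (c : ℕ → ℝ) (ρ : ℝ) : ℝ := ∑' n, c n * ρ ^ (2 ^ n - 1)

noncomputable def lacunarySeries (c : ℕ → ℝ) (z : ℂ) : ℂ := ∑' n, (c n : ℂ) * z ^ (2 ^ n - 1)

noncomputable def lacunaryPrimitive (c : ℕ → ℝ) (z : ℂ) : ℂ :=
  ∑' n, (c n : ℂ) * z ^ 2 ^ n / 2 ^ n

lemma lacunarySeries_ofReal (c : ℕ → ℝ) (s : ℝ) : lacunarySeries c s = lacunarySum c s := by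
  rw [lacunarySeries, lacunarySum, Complex.ofReal_tsum]
  push_cast
  rfl

lemma lacunaryPrimitive_zero (c : ℕ → ℝ) : lacunaryPrimitive c 0 = 0 := by
  simp [lacunaryPrimitive]

variable (hc : ∀ n, 0 ≤ c n)
  (hsum : ∀ ρ ∈ Ico (0 : ℝ) 1, Summable fun n => c n * ρ ^ (2 ^ n - 1))
include hc

lemma norm_lacunaryTerm (n : ℕ) (z : ℂ) :
    ‖(c n : ℂ) * z ^ (2 ^ n - 1)‖ = c n * ‖z‖ ^ (2 ^ n - 1) := by
  rw [norm_mul, norm_pow, Complex.norm_real, Real.norm_of_nonneg (hc n)]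

include hsum

lemma norm_lacunarySeries_le {z : ℂ} (hz : ‖z‖ < 1) : ‖lacunarySeries c z‖ ≤ lacunarySum c ‖z‖ := by
  have hs := hsum ‖z‖ ⟨norm_nonneg z, hz⟩
  simp_rw [← norm_lacunaryTerm hc] at hs
  calc ‖lacunarySeries c z‖ ≤ ∑' n, ‖(c n : ℂ) * z ^ (2 ^ n - 1)‖ := norm_tsum_le_tsum_norm hs
    _ = lacunarySum c ‖z‖ := by simp only [norm_lacunaryTerm hc]; rfl

lemma hasDerivAt_lacunaryPrimitive {z : ℂ} (hz : ‖z‖ < 1) :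
    HasDerivAt (lacunaryPrimitive c) (lacunarySeries c z) z := by
  obtain ⟨ρ, hzρ, hρ1⟩ := exists_between hz
  have hρ : ρ ∈ Ico (0 : ℝ) 1 := ⟨(norm_nonneg z).trans hzρ.le, hρ1⟩
  have hterm (n : ℕ) (y : ℂ) : HasDerivAt (fun w : ℂ => (c n : ℂ) * w ^ 2 ^ n / 2 ^ n)
      ((c n : ℂ) * y ^ (2 ^ n - 1)) y := by
    refine (((hasDerivAt_pow (2 ^ n) y).const_mul (c n : ℂ)).div_const ((2 : ℂ) ^ n)).congr_deriv ?_
    push_cast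
    field_simp
  refine hasDerivAt_tsum_of_isPreconnected (hsum ρ hρ) Metric.isOpen_ball
    (convex_ball 0 ρ).isPreconnected (fun n y _ => hterm n y) (fun n y hy => ?_)
    (Metric.mem_ball_self ((norm_nonneg z).trans_lt hzρ)) (by simp)
    (mem_ball_zero_iff.2 hzρ)
  rw [norm_lacunaryTerm hc]
  gcongr
  · exact hc n
  · exact (mem_ball_zero_iff.1 hy).le

lemma monotoneOn_lacunarySum : MonotoneOn (lacunarySum c) (Ico 0 1) :=
  fun x hx y hy hxy => Summable.tsum_le_tsum (fun n => by gcongr; exacts [hc n, hx.1])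
    (hsum x hx) (hsum y hy)

lemma memBloch_lacunaryPrimitive {ω : ℝ → ℝ} (hω : ∀ ρ ∈ Ico (0 : ℝ) 1, 0 ≤ ω ρ) {B : ℝ}
    (hB : ∀ ρ ∈ Ico (0 : ℝ) 1, ω ρ * lacunarySum c ρ ≤ B) : MemBloch ω (lacunaryPrimitive c) := by
  refine ⟨fun z hz => ?_, B, ?_⟩
  · exact (hasDerivAt_lacunaryPrimitive hc hsum (mem_ball_zero_iff.1 hz)).differentiableAt
      |>.differentiableWithinAt
  · rintro _ ⟨⟨z, hz⟩, rfl⟩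
    have hz1 := mem_ball_zero_iff.1 hz
    have hρ : ‖z‖ ∈ Ico (0 : ℝ) 1 := ⟨norm_nonneg z, hz1⟩
    calc ω ‖z‖ * ‖deriv (lacunaryPrimitive c) z‖ = ω ‖z‖ * ‖lacunarySeries c z‖ := by
          rw [(hasDerivAt_lacunaryPrimitive hc hsum hz1).deriv]
      _ ≤ ω ‖z‖ * lacunarySum c ‖z‖ := by
          gcongr
          exacts [hω _ hρ, norm_lacunarySeries_le hc hsum hz1]
      _ ≤ B := hB _ hρ

end Lacunary

section TildeW

variable {ω : ℝ → ℝ} (hpos : ∀ s ∈ Ico (0 : ℝ) 1, 0 < ω s)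
  (hcont : ContinuousOn ω (Ico 0 1))
include hpos hcont

lemma intervalIntegrable_one_div_weight {t : ℝ} (ht : t ∈ Ico (0 : ℝ) 1) :
    IntervalIntegrable (fun s => 1 / ω s) volume 0 t := by
  have hsub : uIcc 0 t ⊆ Ico (0 : ℝ) 1 := by
    rw [uIcc_of_le ht.1]
    exact fun s hs => ⟨hs.1, hs.2.trans_lt ht.2⟩
  exact ContinuousOn.intervalIntegrable <|
    continuousOn_const.div (hcont.mono hsub) fun s hs => (hpos s (hsub hs)).ne'

lemma monotoneOn_tildeW : MonotoneOn (tildeW ω) (Ico 0 1) := fun _ hx _ hy hxy =>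
  intervalIntegral.integral_mono_interval le_rfl hx.1 hxy
    ((ae_restrict_iff' measurableSet_Ioc).2 <| Eventually.of_forall fun s hs =>
      (one_div_pos.2 (hpos s ⟨hs.1.le, hs.2.trans_lt hy.2⟩)).le)
    (intervalIntegrable_one_div_weight hpos hcont hy)

lemma tildeW_nonneg {t : ℝ} (ht : t ∈ Ico (0 : ℝ) 1) : 0 ≤ tildeW ω t := by
  simpa [tildeW] using monotoneOn_tildeW hpos hcont ⟨le_rfl, one_pos⟩ ht ht.1

lemma mul_tildeW_le_norm_lacunaryPrimitive {c : ℕ → ℝ} (hc : ∀ n, 0 ≤ c n)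
    (hsum : ∀ ρ ∈ Ico (0 : ℝ) 1, Summable fun n => c n * ρ ^ (2 ^ n - 1)) {κ : ℝ}
    (hκ : ∀ s ∈ Ico (0 : ℝ) 1, κ / ω s ≤ lacunarySum c s) {t : ℝ} (ht : t ∈ Ico (0 : ℝ) 1) :
    κ * tildeW ω t ≤ ‖lacunaryPrimitive c t‖ := by
  have hsub : Icc 0 t ⊆ Ico (0 : ℝ) 1 := fun s hs => ⟨hs.1, hs.2.trans_lt ht.2⟩
  have hint : IntervalIntegrable (lacunarySum c) volume 0 t :=
    ((monotoneOn_lacunarySum hc hsum).mono (by rwa [uIcc_of_le ht.1])).intervalIntegrable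
  have hftc : ∫ s in (0 : ℝ)..t, lacunarySum c s = (lacunaryPrimitive c t).re := by
    have hderiv (s : ℝ) (hs : s ∈ uIcc 0 t) :
        HasDerivAt (fun u : ℝ => (lacunaryPrimitive c u).re) (lacunarySum c s) s := by
      rw [uIcc_of_le ht.1] at hs
      have hs1 : ‖(s : ℂ)‖ < 1 := by
        rw [Complex.norm_real, Real.norm_of_nonneg hs.1]
        exact (hsub hs).2
      simpa [lacunarySeries_ofReal] using
        (hasDerivAt_lacunaryPrimitive hc hsum hs1).real_of_complex
    simpa [lacunaryPrimitive_zero] using intervalIntegral.integral_eq_sub_of_hasDerivAt hderiv hint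
  calc κ * tildeW ω t = ∫ s in (0 : ℝ)..t, κ / ω s := by
        simp only [tildeW, ← intervalIntegral.integral_const_mul, mul_one_div]
    _ ≤ ∫ s in (0 : ℝ)..t, lacunarySum c s :=
        intervalIntegral.integral_mono_on ht.1
          ((intervalIntegrable_one_div_weight hpos hcont ht).const_mul κ |>.congr
            fun s _ => mul_one_div κ (ω s)) hint fun s hs => hκ s (hsub hs)
    _ = (lacunaryPrimitive c t).re := hftc
    _ ≤ ‖lacunaryPrimitive c t‖ := Complex.re_le_norm _

end TildeW

section DyadicCoeff

noncomputable def dyadicCoeff (ω : ℝ → ℝ) (n : ℕ) : ℝ := (ω (dyadicPoint n))⁻¹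

variable {ω : ℝ → ℝ} {a b K : ℝ}

lemma weight_mul_dyadicCoeff_le {c ρ : ℝ} {n N : ℕ} (hc : 0 ≤ c) (hK : 0 ≤ K) (hρ : ρ ≤ 1)
    (hN : dyadicPoint N ≤ ρ) (hωn : 0 < ω (dyadicPoint n))
    (h : ω ρ * (1 - dyadicPoint n) ^ c ≤ K * ω (dyadicPoint n) * (1 - ρ) ^ c) :
    ω ρ * dyadicCoeff ω n ≤ K * ((2 : ℝ) ^ c) ^ n / ((2 : ℝ) ^ c) ^ N := by
  set P := (2 : ℝ) ^ c
  have hP : 0 < P := by positivity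
  rw [one_sub_dyadicPoint_rpow] at h
  have h' := h.trans <| mul_le_mul_of_nonneg_left
    (one_sub_rpow_le_of_dyadicPoint_le hc hρ hN) (mul_nonneg hK hωn.le)
  calc ω ρ * dyadicCoeff ω n = ω ρ * (P ^ n)⁻¹ * P ^ n * (ω (dyadicPoint n))⁻¹ := by
        rw [dyadicCoeff]; field_simp
    _ ≤ K * ω (dyadicPoint n) * (P ^ N)⁻¹ * P ^ n * (ω (dyadicPoint n))⁻¹ := by gcongr
    _ = K * P ^ n / P ^ N := by field_simp

variable (hpos : ∀ s ∈ Ico (0 : ℝ) 1, 0 < ω s) (hK : 0 ≤ K)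
include hpos hK

lemma sum_weight_mul_dyadicTerm_le (ha : 0 < a)
    (hdec : ∀ x ∈ Ico (0 : ℝ) 1, ∀ y ∈ Ico (0 : ℝ) 1, x ≤ y →
      ω y * (1 - x) ^ a ≤ K * ω x * (1 - y) ^ a)
    {ρ : ℝ} (hρ : ρ ∈ Ico (0 : ℝ) 1) {N : ℕ} (hN : dyadicPoint N ≤ ρ) :
    ∑ n ∈ Finset.range (N + 1), ω ρ * (dyadicCoeff ω n * ρ ^ (2 ^ n - 1)) ≤
      K * (2 ^ a / (2 ^ a - 1)) := by
  set q := (2 : ℝ) ^ a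
  have hq : 1 < q := Real.one_lt_rpow one_lt_two ha
  have hq0 : 0 < q := by positivity
  have hterm (n : ℕ) (hn : n ∈ Finset.range (N + 1)) :
      ω ρ * (dyadicCoeff ω n * ρ ^ (2 ^ n - 1)) ≤ K * q ^ n / q ^ N := by
    have hrn := dyadicPoint_mem_Ico n
    have hnρ := (dyadicPoint_mono (Nat.lt_succ_iff.1 (Finset.mem_range.1 hn))).trans hN
    rw [← mul_assoc, ← mul_one (K * q ^ n / q ^ N)]
    exact mul_le_mul (weight_mul_dyadicCoeff_le ha.le hK hρ.2.le hN (hpos _ hrn)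
        (hdec _ hrn ρ hρ hnρ)) (pow_le_one₀ hρ.1 hρ.2.le) (pow_nonneg hρ.1 _)
      (div_nonneg (mul_nonneg hK (pow_nonneg hq0.le _)) (pow_nonneg hq0.le _))
  calc _ ≤ ∑ n ∈ Finset.range (N + 1), K * q ^ n / q ^ N := Finset.sum_le_sum hterm
    _ = K / q ^ N * ((q ^ (N + 1) - 1) / (q - 1)) := by
        rw [← geom_sum_eq hq.ne', Finset.mul_sum]
        exact Finset.sum_congr rfl fun n _ => by ring
    _ ≤ K / q ^ N * (q ^ (N + 1) / (q - 1)) := by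
        gcongr
        linarith
    _ = K * (q / (q - 1)) := by
        rw [pow_succ]
        field_simp

lemma weight_mul_dyadicTerm_tail_le (hb : 0 ≤ b)
    (hinc : ∀ x ∈ Ico (0 : ℝ) 1, ∀ y ∈ Ico (0 : ℝ) 1, x ≤ y →
      ω x * (1 - y) ^ b ≤ K * ω y * (1 - x) ^ b)
    {ρ : ℝ} (hρ : ρ ∈ Ico (0 : ℝ) 1) {N : ℕ} (hN : dyadicPoint N ≤ ρ)
    (hN' : ρ < dyadicPoint (N + 1)) (j : ℕ) :
    ω ρ * (dyadicCoeff ω (j + (N + 1)) * ρ ^ (2 ^ (j + (N + 1)) - 1)) ≤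
      K * 2 ^ b * ((2 ^ b) ^ j * Real.exp (-1 / 2) ^ 2 ^ j) := by
  set p := (2 : ℝ) ^ b
  have hp : 0 < p := by positivity
  have hrn := dyadicPoint_mem_Ico (j + (N + 1))
  have hcoeff : ω ρ * dyadicCoeff ω (j + (N + 1)) ≤ K * p * p ^ j := by
    calc ω ρ * dyadicCoeff ω (j + (N + 1)) ≤ K * p ^ (j + (N + 1)) / p ^ N :=
          weight_mul_dyadicCoeff_le hb hK hρ.2.le hN (hpos _ hrn)
            (hinc ρ hρ _ hrn (hN'.le.trans (dyadicPoint_mono (by omega))))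
      _ = K * p * p ^ j := by
          rw [pow_add, pow_succ]
          field_simp
  rw [← mul_assoc, ← mul_assoc (K * p)]
  exact mul_le_mul hcoeff (dyadicPoint_pow_le_exp hρ.1 hN' j) (pow_nonneg hρ.1 _)
    (mul_nonneg (mul_nonneg hK hp.le) (pow_nonneg hp.le _))

lemma summable_dyadicTerm (hb : 0 ≤ b)
    (hinc : ∀ x ∈ Ico (0 : ℝ) 1, ∀ y ∈ Ico (0 : ℝ) 1, x ≤ y →
      ω x * (1 - y) ^ b ≤ K * ω y * (1 - x) ^ b)
    {ρ : ℝ} (hρ : ρ ∈ Ico (0 : ℝ) 1) : Summable fun n => dyadicCoeff ω n * ρ ^ (2 ^ n - 1) := by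
  obtain ⟨N, hN, hN'⟩ := exists_dyadicPoint_le_lt hρ
  refine (summable_nat_add_iff (N + 1)).1 <| Summable.of_nonneg_of_le (fun n => ?_)
    (fun j => (le_div_iff₀' (hpos ρ hρ)).2
      (weight_mul_dyadicTerm_tail_le hpos hK hb hinc hρ hN hN' j))
    (((summable_pow_mul_pow_two_pow (by positivity) (Real.exp_pos _).le
      (Real.exp_lt_one_iff.2 (by norm_num))).mul_left (K * 2 ^ b)).div_const (ω ρ))
  exact mul_nonneg (inv_nonneg.2 (hpos _ (dyadicPoint_mem_Ico _)).le) (pow_nonneg hρ.1 _)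

lemma weight_mul_lacunarySum_le {Ka : ℝ} (hKa : 0 ≤ Ka) (ha : 0 < a) (hb : 0 ≤ b)
    (hdec : ∀ x ∈ Ico (0 : ℝ) 1, ∀ y ∈ Ico (0 : ℝ) 1, x ≤ y →
      ω y * (1 - x) ^ a ≤ Ka * ω x * (1 - y) ^ a)
    (hinc : ∀ x ∈ Ico (0 : ℝ) 1, ∀ y ∈ Ico (0 : ℝ) 1, x ≤ y →
      ω x * (1 - y) ^ b ≤ K * ω y * (1 - x) ^ b)
    {ρ : ℝ} (hρ : ρ ∈ Ico (0 : ℝ) 1) :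
    ω ρ * lacunarySum (dyadicCoeff ω) ρ ≤
      Ka * (2 ^ a / (2 ^ a - 1)) +
        K * 2 ^ b * ∑' j : ℕ, (2 ^ b) ^ j * Real.exp (-1 / 2) ^ 2 ^ j := by
  obtain ⟨N, hN, hN'⟩ := exists_dyadicPoint_le_lt hρ
  have hs := (summable_dyadicTerm hpos hK hb hinc hρ).mul_left (ω ρ)
  rw [lacunarySum, ← tsum_mul_left, ← hs.sum_add_tsum_nat_add (N + 1), ← tsum_mul_left]
  refine add_le_add (sum_weight_mul_dyadicTerm_le hpos hKa ha hdec hρ hN) ?_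
  exact Summable.tsum_le_tsum (weight_mul_dyadicTerm_tail_le hpos hK hb hinc hρ hN hN')
    ((summable_nat_add_iff (N + 1)).2 hs)
    ((summable_pow_mul_pow_two_pow (by positivity) (Real.exp_pos _).le
      (Real.exp_lt_one_iff.2 (by norm_num))).mul_left _)

lemma div_weight_le_lacunarySum (hb : 0 ≤ b)
    (hinc : ∀ x ∈ Ico (0 : ℝ) 1, ∀ y ∈ Ico (0 : ℝ) 1, x ≤ y →
      ω x * (1 - y) ^ b ≤ K * ω y * (1 - x) ^ b)
    {s : ℝ} (hs : s ∈ Ico (0 : ℝ) 1) :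
    (4 * K * 2 ^ b)⁻¹ / ω s ≤ lacunarySum (dyadicCoeff ω) s := by
  obtain ⟨N, hN, hN'⟩ := exists_dyadicPoint_le_lt hs
  set p := (2 : ℝ) ^ b
  have hp : 0 < p := by positivity
  have hrN := dyadicPoint_mem_Ico N
  have hωN := hpos _ hrN
  have hωs := hpos s hs
  have hcmp := hinc _ hrN s hs hN
  rw [one_sub_dyadicPoint_rpow] at hcmp
  have hlow : (p ^ (N + 1))⁻¹ ≤ (1 - s) ^ b := by
    rw [← one_sub_dyadicPoint_rpow]
    exact Real.rpow_le_rpow (by linarith [(dyadicPoint_mem_Ico (N + 1)).2]) (by linarith) hb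
  have hωN_le : ω (dyadicPoint N) ≤ K * p * ω s := by
    calc ω (dyadicPoint N) = ω (dyadicPoint N) * (p ^ (N + 1))⁻¹ * p ^ (N + 1) := by field_simp
      _ ≤ K * ω s * (p ^ N)⁻¹ * p ^ (N + 1) := by
          gcongr ?_ * _
          exact (mul_le_mul_of_nonneg_left hlow hωN.le).trans hcmp
      _ = K * p * ω s := by
          rw [pow_succ]
          field_simp
  have hterm : (4 * K * p)⁻¹ / ω s ≤ dyadicCoeff ω N * s ^ (2 ^ N - 1) := by
    calc (4 * K * p)⁻¹ / ω s = (K * p * ω s)⁻¹ * (1 / 4) := by field_simp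
      _ ≤ dyadicCoeff ω N * s ^ (2 ^ N - 1) :=
          mul_le_mul (inv_anti₀ hωN hωN_le)
            ((quarter_le_dyadicPoint_pow N).trans (pow_le_pow_left₀ hrN.1 hN _)) (by norm_num)
            (inv_nonneg.2 hωN.le)
  exact hterm.trans <| (summable_dyadicTerm hpos hK hb hinc hs).le_tsum N fun n _ =>
    mul_nonneg (inv_nonneg.2 (hpos _ (dyadicPoint_mem_Ico n)).le) (pow_nonneg hs.1 _)

end DyadicCoeff

lemma memBloch_const (ω : ℝ → ℝ) (w : ℂ) : MemBloch ω fun _ => w := by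
  refine ⟨differentiableOn_const _, 0, ?_⟩
  rintro _ ⟨z, rfl⟩
  simp

theorem IsNormal.exists_memBloch_tildeW_le {ω : ℝ → ℝ} {a b : ℝ} (hω : IsNormal ω a b) :
    ∃ F, MemBloch ω F ∧ ∃ C, ∀ t ∈ Ico (0 : ℝ) 1, tildeW ω t ≤ C * ‖F t‖ := by
  obtain ⟨Ka, hKa, hdec⟩ := hω.exists_decreasing_comparison
  obtain ⟨Kb, hKb, hinc⟩ := hω.exists_increasing_comparison
  obtain ⟨ha, hab, hpos, hcont, -, -⟩ := hω
  have hb := ha.le.trans hab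
  have hc (n : ℕ) : 0 ≤ dyadicCoeff ω n := (inv_pos.2 (hpos _ (dyadicPoint_mem_Ico n))).le
  have hsum := fun ρ (hρ : ρ ∈ Ico (0 : ℝ) 1) => summable_dyadicTerm hpos hKb.le hb hinc hρ
  have hκ : 0 < (4 * Kb * 2 ^ b)⁻¹ := by positivity
  refine ⟨lacunaryPrimitive (dyadicCoeff ω),
    memBloch_lacunaryPrimitive hc hsum (fun ρ hρ => (hpos ρ hρ).le)
      fun ρ hρ => weight_mul_lacunarySum_le hpos hKb.le hKa.le ha hb hdec hinc hρ,
    _, fun t ht => (le_inv_mul_iff₀ hκ).2 ?_⟩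
  exact mul_tildeW_le_norm_lacunaryPrimitive hpos hcont hc hsum
    (fun s hs => div_weight_le_lacunarySum hpos hKb.le hb hinc hs) ht

theorem stmt11_general (ω : ℝ → ℝ) (a b : ℝ) (hω : IsNormal ω a b) (μ : Measure ℝ)
    (h : ∀ f : ℂ → ℂ, MemBloch ω f →
      Integrable (fun t : ℝ => f (t : ℂ)) (μ.restrict (Ico 0 1))) :
    Integrable (fun t => tildeW ω t + 1) (μ.restrict (Ico 0 1)) := by
  obtain ⟨F, hF, C, hC⟩ := hω.exists_memBloch_tildeW_le
  obtain ⟨-, -, hpos, hcont, -, -⟩ := hω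
  refine (((h F hF).norm.const_mul C).add (h _ (memBloch_const ω 1)).norm).mono' ?_ ?_
  · exact ((aemeasurable_restrict_of_monotoneOn measurableSet_Ico
      (monotoneOn_tildeW hpos hcont)).add_const 1).aestronglyMeasurable
  · refine (ae_restrict_iff' measurableSet_Ico).2 (Eventually.of_forall fun t ht => ?_)
    rw [Real.norm_of_nonneg (by linarith [tildeW_nonneg hpos hcont ht])]
    simpa using hC t ht

theorem stmt11 (ω : ℝ → ℝ) (a b : ℝ) (hω : IsNormal ω a b) (μ : Measure ℝ) (α : ℝ)
    (hα : -1 < α)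
    (h : ∀ f : ℂ → ℂ, MemBloch ω f →
      Integrable (fun t : ℝ => f (t : ℂ)) (μ.restrict (Ico 0 1))) :
    Integrable (fun t => tildeW ω t + 1) (μ.restrict (Ico 0 1)) :=
  stmt11_general ω a b hω μ h
end

section
/- Let ω, ν be normal weights on [0,1), α > -1, and μ a finite positive Borel measure on [0,1). Assume ω̃(1) = ∫_0^1 ds/ω(s) < ∞. If sup_{n≥1} n^{α+2} ν(1-1/n) μ_n < ∞, where μ_n = ∫_0^1 t^n dμ(t), then I_{μ,α+1}: B_ω → B_ν is compact. -/
/-!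
Since `ω̃(1) < ∞`, integrating `|f'(s)| ≤ ‖f‖_{B_ω} / ω(s)` along `[0,1)` bounds `f` on `[0,1)` by
a multiple of `‖f‖_{B_ω}`; as the tail `∫_r^1 ds/ω(s)` is small for `r` near `1`, a bounded
sequence tending to `0` on compacta tends to `0` uniformly on `[0,1)`.

The operator only sees `f` on `[0,1)`: with `r = |z|`,
`ν(r) |I(f)'(z)| ≤ (α+1) sup_{[0,1)} |f| · ν(r) ∫ (1-tr)^{-(α+2)} dμ(t)`.
Cutting `[0,1)` at the points `1 - 2^{-j}`, Bernoulli's inequality gives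
`μ[1 - 2^{-(j+1)}, 1) ≤ 2 μ_{2^j}`, so the moment condition bounds the dyadic pieces, and since
`ν(r) / ν(1 - 2^{-j}) ≲ (2^j (1-r))^a` the resulting sum is geometric, uniformly in `r`.
Hence `‖I f‖_{B_ν} ≲ sup_{[0,1)} |f|`, which yields boundedness and compactness at once.
-/

open MeasureTheory Set Filter

open Topology

lemma IsNormal.le_mul_one_sub_div_rpow {ν : ℝ → ℝ} {a b : ℝ} (hν : IsNormal ν a b) :
    ∃ C > 0, ∀ x ∈ Ico (0:ℝ) 1, ∀ y ∈ Ico (0:ℝ) 1, x ≤ y →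
      ν y ≤ C * ν x * ((1 - y) / (1 - x)) ^ a := by
  obtain ⟨ha, -, hpos, -, ⟨C, hC, hdec⟩, -⟩ := hν
  have h2a : 1 ≤ (2:ℝ) ^ a := Real.one_le_rpow one_le_two ha.le
  refine ⟨max C 1 * 2 ^ a, by positivity, fun x hx y hy hxy => ?_⟩
  have hx1 : 0 < 1 - x := sub_pos.2 hx.2
  have hy1 : 0 < 1 - y := sub_pos.2 hy.2
  rcases hxy.eq_or_lt with rfl | hlt
  · rw [div_self hx1.ne', Real.one_rpow, mul_one]
    have h1 : 1 ≤ max C 1 * 2 ^ a := one_le_mul_of_one_le_of_one_le (le_max_right C 1) h2a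
    nlinarith [hpos x hx]
  have hsq : (1 - y ^ 2) / (1 - x ^ 2) ≤ 2 * ((1 - y) / (1 - x)) := by
    rw [div_le_iff₀ (by nlinarith [hx.1]), mul_div_assoc', div_mul_eq_mul_div,
      le_div_iff₀ hx1]
    nlinarith [hx.1, hy.1, mul_pos hx1 hy1]
  have hdec' : ν y ≤ C * ν x * ((1 - y ^ 2) / (1 - x ^ 2)) ^ a := by
    have := hdec x hx y hy hlt
    rw [div_le_iff₀ (Real.rpow_pos_of_pos (by nlinarith [hy.1]) a)] at this
    rw [Real.div_rpow (by nlinarith [hy.1]) (by nlinarith [hx.1])]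
    calc ν y ≤ C * (ν x / (1 - x ^ 2) ^ a) * (1 - y ^ 2) ^ a := this
      _ = _ := by ring
  calc ν y ≤ C * ν x * ((1 - y ^ 2) / (1 - x ^ 2)) ^ a := hdec'
    _ ≤ C * ν x * (2 * ((1 - y) / (1 - x))) ^ a := by
        gcongr
        · exact (mul_pos hC (hpos x hx)).le
        · exact div_nonneg (by nlinarith [hy.1]) (by nlinarith [hx.1])
    _ ≤ max C 1 * 2 ^ a * ν x * ((1 - y) / (1 - x)) ^ a := by
        rw [Real.mul_rpow zero_le_two (div_nonneg hy1.le hx1.le)]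
        have := hpos x hx
        have : 0 ≤ ((1 - y) / (1 - x)) ^ a := by positivity
        have : (0:ℝ) ≤ 2 ^ a := by positivity
        have := le_max_left C 1
        calc C * ν x * (2 ^ a * ((1 - y) / (1 - x)) ^ a)
            = C * (2 ^ a * ν x * ((1 - y) / (1 - x)) ^ a) := by ring
          _ ≤ max C 1 * (2 ^ a * ν x * ((1 - y) / (1 - x)) ^ a) := by gcongr
          _ = _ := by ring

lemma one_sub_one_div_two_pow_mem_Ico (j : ℕ) : 1 - 1 / (2:ℝ) ^ j ∈ Ico (0:ℝ) 1 := by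
  have h0 : 0 < 1 / (2:ℝ) ^ j := by positivity
  have h1 : 1 / (2:ℝ) ^ j ≤ 1 := by
    rw [div_le_one (by positivity)]; exact one_le_pow₀ one_le_two
  exact ⟨by linarith, by linarith⟩

lemma rpow_neg_le_of_one_div_lt {c s N : ℝ} (hc : 0 ≤ c) (hN : 0 < N) (hs : 1 / N < s) :
    s ^ (-c) ≤ N ^ c := by
  have hs0 : 0 < s := (one_div_pos.2 hN).trans hs
  rw [Real.rpow_neg hs0.le, ← Real.inv_rpow hs0.le]
  exact Real.rpow_le_rpow (inv_nonneg.2 hs0.le)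
    ((inv_le_comm₀ hs0 hN).2 (by rw [← one_div]; exact hs.le)) hc

lemma rpow_neg_le_dyadic_sum {c s : ℝ} (hc : 0 ≤ c) {m : ℕ} (hm : 1 / 2 ^ (m + 1) < s) :
    s ^ (-c) ≤ 2 ^ c + ∑ j ∈ Finset.range m,
      if s ≤ 1 / 2 ^ (j + 1) then ((2:ℝ) ^ (j + 2)) ^ c else 0 := by
  have hterm : ∀ j, 0 ≤ if s ≤ 1 / 2 ^ (j + 1) then ((2:ℝ) ^ (j + 2)) ^ c else 0 := by
    intro j; split_ifs <;> positivity
  induction m with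
  | zero => simpa using rpow_neg_le_of_one_div_lt hc two_pos (by simpa using hm)
  | succ m ih =>
    rw [Finset.sum_range_succ, ← add_assoc]
    by_cases hsm : s ≤ 1 / 2 ^ (m + 1)
    · have hsum : 0 ≤ 2 ^ c + ∑ j ∈ Finset.range m,
          if s ≤ 1 / 2 ^ (j + 1) then ((2:ℝ) ^ (j + 2)) ^ c else 0 :=
        add_nonneg (by positivity) (Finset.sum_nonneg fun j _ => hterm j)
      rw [if_pos hsm]
      linarith [rpow_neg_le_of_one_div_lt hc (by positivity : (0:ℝ) < 2 ^ (m + 2)) hm]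
    · linarith [ih (not_le.1 hsm), hterm m]

lemma measureReal_Ico_le_two_mul_moment (μ : Measure ℝ) [IsFiniteMeasure μ] {n : ℕ} {s : ℝ}
    (hs0 : 0 ≤ s) (hs : n * (1 - s) ≤ 1 / 2) :
    μ.real (Ico s 1) ≤ 2 * ∫ t in Ico (0:ℝ) 1, t ^ n ∂μ := by
  have hsub : Ico s 1 ⊆ Ico (0:ℝ) 1 := Ico_subset_Ico_left hs0
  have hint : IntegrableOn (fun t : ℝ => 2 * t ^ n) (Ico 0 1) μ :=
    (continuous_const.mul (continuous_pow n)).integrableOn_Icc.mono_set Ico_subset_Icc_self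
  have hbernoulli : ∀ t ∈ Ico s 1, 1 ≤ 2 * t ^ n := by
    intro t ht
    have h := one_add_mul_le_pow (a := t - 1) (by linarith [hs0.trans ht.1]) n
    rw [add_sub_cancel] at h
    nlinarith [mul_le_mul_of_nonneg_left ht.1 (Nat.cast_nonneg (α := ℝ) n)]
  calc μ.real (Ico s 1) = ∫ _ in Ico s 1, (1:ℝ) ∂μ := by simp
    _ ≤ ∫ t in Ico s 1, 2 * t ^ n ∂μ :=
        setIntegral_mono_on (integrableOn_const (measure_ne_top μ _)) (hint.mono_set hsub)
          measurableSet_Ico hbernoulli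
    _ ≤ ∫ t in Ico (0:ℝ) 1, 2 * t ^ n ∂μ := by
        refine setIntegral_mono_set hint ?_ hsub.eventuallyLE
        filter_upwards [ae_restrict_mem measurableSet_Ico] with t ht
        exact mul_nonneg zero_le_two (pow_nonneg ht.1 n)
    _ = 2 * ∫ t in Ico (0:ℝ) 1, t ^ n ∂μ := integral_const_mul 2 _

lemma setIntegral_one_sub_mul_rpow_neg_le_dyadic_sum (μ : Measure ℝ) [IsFiniteMeasure μ]
    {c r : ℝ} (hc : 0 ≤ c) (hr : r ∈ Ico (0:ℝ) 1) {m : ℕ} (hm : 1 / 2 ^ (m + 1) < 1 - r) :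
    ∫ t in Ico (0:ℝ) 1, (1 - t * r) ^ (-c) ∂μ ≤ 2 ^ c * μ.real (Ico 0 1) +
      ∑ j ∈ Finset.range m,
        ((2:ℝ) ^ (j + 2)) ^ c * μ.real (Ico (1 - 1 / 2 ^ (j + 1)) 1) := by
  set g : ℝ → ℝ := fun t => 2 ^ c + ∑ j ∈ Finset.range m,
    (Ico (1 - 1 / 2 ^ (j + 1)) 1).indicator (fun _ => ((2:ℝ) ^ (j + 2)) ^ c) t
  have hg_int : Integrable g (μ.restrict (Ico 0 1)) :=
    (integrable_const _).add (integrable_finsetSum _ fun j _ =>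
      (integrable_const _).indicator measurableSet_Ico)
  have hle : ∀ t ∈ Ico (0:ℝ) 1, (1 - t * r) ^ (-c) ≤ g t := by
    intro t ht
    have htr : t * r ≤ t := mul_le_of_le_one_right ht.1 hr.2.le
    have htr' : t * r ≤ r := mul_le_of_le_one_left hr.1 ht.2.le
    refine (rpow_neg_le_dyadic_sum hc (s := 1 - t * r) (by linarith)).trans
      (add_le_add_right (Finset.sum_le_sum fun j _ => ?_) _)
    split_ifs with h
    · rw [indicator_of_mem (show t ∈ Ico (1 - 1 / 2 ^ (j + 1)) 1 from ⟨by linarith, ht.2⟩)]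
    · exact indicator_nonneg (fun _ _ => by positivity) _
  have hint_g : ∫ t in Ico (0:ℝ) 1, g t ∂μ = 2 ^ c * μ.real (Ico 0 1) +
      ∑ j ∈ Finset.range m,
        ((2:ℝ) ^ (j + 2)) ^ c * μ.real (Ico (1 - 1 / 2 ^ (j + 1)) 1) := by
    rw [integral_add (integrable_const _) (integrable_finsetSum _ fun j _ =>
      (integrable_const _).indicator measurableSet_Ico), integral_finsetSum _ fun j _ =>
      (integrable_const _).indicator measurableSet_Ico, setIntegral_const, smul_eq_mul, mul_comm]
    congr 1
    refine Finset.sum_congr rfl fun j _ => ?_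
    rw [integral_indicator_const _ measurableSet_Ico, measureReal_restrict_apply measurableSet_Ico,
      Ico_inter_Ico, max_eq_left (one_sub_one_div_two_pow_mem_Ico (j + 1)).1, min_self,
      smul_eq_mul, mul_comm]
  rw [← hint_g]
  refine integral_mono_of_nonneg ?_ hg_int ?_
  · filter_upwards [ae_restrict_mem measurableSet_Ico] with t ht
    exact Real.rpow_nonneg (by nlinarith [ht.1, ht.2, hr.1, hr.2]) _
  · filter_upwards [ae_restrict_mem measurableSet_Ico] with t ht
    exact hle t ht

lemma IsNormal.exists_sum_div_le {ν : ℝ → ℝ} {a b : ℝ} (hν : IsNormal ν a b) :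
    ∃ K, ∀ r ∈ Ico (0:ℝ) 1, ∀ m : ℕ, 1 - r ≤ 1 / 2 ^ m →
      ∑ j ∈ Finset.range m, ν r / ν (1 - 1 / 2 ^ j) ≤ K := by
  obtain ⟨C, hC, hCν⟩ := hν.le_mul_one_sub_div_rpow
  obtain ⟨ha, -, hpos, -⟩ := hν
  have h2a : 1 < (2:ℝ) ^ a := Real.one_lt_rpow one_lt_two ha
  refine ⟨C / (2 ^ a - 1), fun r hr m hm => ?_⟩
  have hr1 : 0 < 1 - r := sub_pos.2 hr.2
  have hterm : ∀ j ∈ Finset.range m,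
      ν r / ν (1 - 1 / 2 ^ j) ≤ C * (1 - r) ^ a * ((2:ℝ) ^ a) ^ j := by
    intro j hj
    have hxj := one_sub_one_div_two_pow_mem_Ico j
    have hxr : 1 - 1 / (2:ℝ) ^ j ≤ r := by
      have : (1:ℝ) / 2 ^ m ≤ 1 / 2 ^ j :=
        one_div_pow_le_one_div_pow_of_le one_le_two (Finset.mem_range.1 hj).le
      linarith
    have h := hCν _ hxj r hr hxr
    rw [sub_sub_cancel, div_div_eq_mul_div, div_one,
      Real.mul_rpow hr1.le (by positivity), ← Real.rpow_pow_comm zero_le_two] at h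
    rw [div_le_iff₀ (hpos _ hxj)]
    linarith
  have hgeom : ∑ j ∈ Finset.range m, ((2:ℝ) ^ a) ^ j ≤ ((2:ℝ) ^ a) ^ m / (2 ^ a - 1) := by
    rw [geom_sum_eq h2a.ne']
    gcongr
    linarith
  have hscale : (1 - r) ^ a * ((2:ℝ) ^ a) ^ m ≤ 1 := by
    rw [Real.rpow_pow_comm zero_le_two, ← Real.mul_rpow hr1.le (by positivity)]
    refine Real.rpow_le_one (by positivity) ?_ ha.le
    rwa [le_div_iff₀ (by positivity)] at hm
  calc ∑ j ∈ Finset.range m, ν r / ν (1 - 1 / 2 ^ j)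
      ≤ ∑ j ∈ Finset.range m, C * (1 - r) ^ a * ((2:ℝ) ^ a) ^ j := Finset.sum_le_sum hterm
    _ = C * ((1 - r) ^ a * ∑ j ∈ Finset.range m, ((2:ℝ) ^ a) ^ j) := by
        rw [← Finset.mul_sum, mul_assoc]
    _ ≤ C * ((1 - r) ^ a * (((2:ℝ) ^ a) ^ m / (2 ^ a - 1))) := by gcongr
    _ = C * ((1 - r) ^ a * ((2:ℝ) ^ a) ^ m) / (2 ^ a - 1) := by ring
    _ ≤ C * 1 / (2 ^ a - 1) := by gcongr
    _ = C / (2 ^ a - 1) := by rw [mul_one]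

lemma rpow_mul_measureReal_Ico_le (μ : Measure ℝ) [IsFiniteMeasure μ] {ν : ℝ → ℝ}
    (hν : ∀ s ∈ Ico (0:ℝ) 1, 0 < ν s) {c M : ℝ}
    (hM : ∀ n : ℕ, 1 ≤ n →
      (n : ℝ) ^ c * ν (1 - 1 / (n:ℝ)) * ∫ t in Ico (0:ℝ) 1, t ^ n ∂μ ≤ M) (j : ℕ) :
    ((2:ℝ) ^ (j + 2)) ^ c * μ.real (Ico (1 - 1 / 2 ^ (j + 1)) 1) ≤
      2 * 4 ^ c * M / ν (1 - 1 / 2 ^ j) := by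
  have hνj := hν _ (one_sub_one_div_two_pow_mem_Ico j)
  have hmeas := measureReal_Ico_le_two_mul_moment μ (n := 2 ^ j)
    (one_sub_one_div_two_pow_mem_Ico (j + 1)).1
    (by rw [sub_sub_cancel, pow_succ]; push_cast; field_simp; rfl)
  have hmom := hM (2 ^ j) Nat.one_le_two_pow
  push_cast at hmom
  have hsplit : ((2:ℝ) ^ (j + 2)) ^ c = 4 ^ c * ((2:ℝ) ^ j) ^ c := by
    rw [← Real.mul_rpow (by norm_num) (by positivity)]; ring_nf
  rw [le_div_iff₀ hνj, hsplit]
  calc 4 ^ c * ((2:ℝ) ^ j) ^ c * μ.real (Ico (1 - 1 / 2 ^ (j + 1)) 1) * ν (1 - 1 / 2 ^ j)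
      ≤ 4 ^ c * ((2:ℝ) ^ j) ^ c * (2 * ∫ t in Ico (0:ℝ) 1, t ^ 2 ^ j ∂μ) *
        ν (1 - 1 / 2 ^ j) := by gcongr
    _ = 2 * 4 ^ c *
          (((2:ℝ) ^ j) ^ c * ν (1 - 1 / 2 ^ j) * ∫ t in Ico (0:ℝ) 1, t ^ 2 ^ j ∂μ) := by
        ring
    _ ≤ 2 * 4 ^ c * M := by gcongr

lemma IsNormal.exists_mul_setIntegral_le {ν : ℝ → ℝ} {a b : ℝ} (hν : IsNormal ν a b)
    (μ : Measure ℝ) [IsFiniteMeasure μ] {c M : ℝ} (hc : 0 ≤ c)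
    (hM : ∀ n : ℕ, 1 ≤ n →
      (n : ℝ) ^ c * ν (1 - 1 / (n:ℝ)) * ∫ t in Ico (0:ℝ) 1, t ^ n ∂μ ≤ M) :
    ∃ K, ∀ r ∈ Ico (0:ℝ) 1,
      ν r * ∫ t in Ico (0:ℝ) 1, (1 - t * r) ^ (-c) ∂μ ≤ K := by
  obtain ⟨C, hC, hCν⟩ := hν.le_mul_one_sub_div_rpow
  obtain ⟨K, hK⟩ := hν.exists_sum_div_le
  have hpos := hν.2.2.1
  have hν0 : ∀ r ∈ Ico (0:ℝ) 1, ν r ≤ C * ν 0 := by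
    intro r hr
    have h := hCν 0 ⟨le_rfl, one_pos⟩ r hr hr.1
    have h1 : ((1 - r) / (1 - 0)) ^ a ≤ 1 :=
      Real.rpow_le_one (by linarith [hr.2]) (by linarith [hr.1]) hν.1.le
    have := mul_pos hC (hpos 0 ⟨le_rfl, one_pos⟩)
    nlinarith
  have hM' : ∀ n : ℕ, 1 ≤ n →
      (n : ℝ) ^ c * ν (1 - 1 / (n:ℝ)) * ∫ t in Ico (0:ℝ) 1, t ^ n ∂μ ≤ max M 0 :=
    fun n hn => (hM n hn).trans (le_max_left M 0)
  have hshell := rpow_mul_measureReal_Ico_le μ hpos hM'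
  refine ⟨C * ν 0 * (2 ^ c * μ.real (Ico 0 1)) + 2 * 4 ^ c * max M 0 * K, fun r hr => ?_⟩
  have hr1 : 0 < 1 - r := sub_pos.2 hr.2
  obtain ⟨m, hm_le, hm_lt⟩ := exists_nat_pow_near (x := 1 / (1 - r)) (y := (2:ℝ))
    (by rw [le_div_iff₀ hr1]; linarith [hr.1]) one_lt_two
  have hνr := hpos r hr
  calc ν r * ∫ t in Ico (0:ℝ) 1, (1 - t * r) ^ (-c) ∂μ
      ≤ ν r * (2 ^ c * μ.real (Ico 0 1) + ∑ j ∈ Finset.range m,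
          ((2:ℝ) ^ (j + 2)) ^ c * μ.real (Ico (1 - 1 / 2 ^ (j + 1)) 1)) := by
        gcongr
        refine setIntegral_one_sub_mul_rpow_neg_le_dyadic_sum μ hc hr ?_
        rwa [one_div_lt (by positivity) hr1]
    _ ≤ C * ν 0 * (2 ^ c * μ.real (Ico 0 1)) +
          2 * 4 ^ c * max M 0 * ∑ j ∈ Finset.range m, ν r / ν (1 - 1 / 2 ^ j) := by
        rw [mul_add, Finset.mul_sum, Finset.mul_sum]
        refine add_le_add (by gcongr; exact hν0 r hr) (Finset.sum_le_sum fun j _ => ?_)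
        calc ν r * (((2:ℝ) ^ (j + 2)) ^ c * μ.real (Ico (1 - 1 / 2 ^ (j + 1)) 1))
            ≤ ν r * (2 * 4 ^ c * max M 0 / ν (1 - 1 / 2 ^ j)) := by gcongr; exact hshell j
          _ = _ := by ring
    _ ≤ C * ν 0 * (2 ^ c * μ.real (Ico 0 1)) + 2 * 4 ^ c * max M 0 * K := by
        gcongr
        rw [le_div_iff₀ hr1] at hm_le
        exact hK r hr m (by rw [le_div_iff₀ (by positivity)]; linarith)

lemma ofReal_mem_ball {t : ℝ} (ht : t ∈ Ico (0:ℝ) 1) : (t:ℂ) ∈ Metric.ball (0:ℂ) 1 := by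
  rw [mem_ball_zero_iff, Complex.norm_real, Real.norm_of_nonneg ht.1]
  exact ht.2

lemma norm_one_sub_cpow_neg_le {w : ℂ} (hw : ‖w‖ < 1) {γ : ℝ} (hγ : 0 ≤ γ) :
    ‖(1 - w) ^ (-(γ:ℂ))‖ ≤ (1 - ‖w‖) ^ (-γ) := by
  rw [← Complex.ofReal_neg, Complex.norm_cpow_real]
  refine Real.rpow_le_rpow_of_nonpos (sub_pos.2 hw) ?_ (neg_nonpos.2 hγ)
  simpa using norm_sub_norm_le (1:ℂ) w

lemma one_sub_ofReal_mul_mem_slitPlane {t : ℝ} (ht : t ∈ Ico (0:ℝ) 1) {x : ℂ}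
    (hx : ‖x‖ < 1) :
    1 - (t:ℂ) * x ∈ Complex.slitPlane := by
  rw [sub_eq_add_neg]
  refine Complex.mem_slitPlane_of_norm_lt_one ?_
  rw [norm_neg, norm_mul, Complex.norm_real, Real.norm_of_nonneg ht.1]
  nlinarith [ht.2, norm_nonneg x]

lemma hasDerivAt_one_sub_mul_cpow_neg (c τ : ℂ) {z : ℂ}
    (hz : 1 - τ * z ∈ Complex.slitPlane) :
    HasDerivAt (fun x => (1 - τ * x) ^ (-c)) (c * τ * (1 - τ * z) ^ (-(c + 1))) z := by
  have h := ((hasDerivAt_id' z).const_mul τ).const_sub 1 |>.cpow_const (c := -c) hz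
  convert h using 1
  rw [show -c - 1 = -(c + 1) by ring]
  ring

lemma norm_one_sub_ofReal_mul_cpow_neg_le {t : ℝ} (ht : t ∈ Ico (0:ℝ) 1) {x : ℂ}
    (hx : ‖x‖ < 1) {γ : ℝ} (hγ : 0 ≤ γ) :
    ‖(1 - t * x) ^ (-(γ:ℂ))‖ ≤ (1 - t * ‖x‖) ^ (-γ) := by
  have htx : ‖(t:ℂ) * x‖ = t * ‖x‖ := by
    rw [norm_mul, Complex.norm_real, Real.norm_of_nonneg ht.1]
  rw [← htx]
  exact norm_one_sub_cpow_neg_le (by rw [htx]; nlinarith [ht.2, norm_nonneg x]) hγ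

lemma norm_mul_kernel_deriv_le {α δ t : ℝ} (hα : -1 < α) (ht : t ∈ Ico (0:ℝ) 1) {x w : ℂ}
    (hx : ‖x‖ < 1) (hw : ‖w‖ ≤ δ) :
    ‖w * ((α + 1) * t * (1 - t * x) ^ (-((α:ℂ) + 2)))‖ ≤
      δ * (α + 1) * (1 - t * ‖x‖) ^ (-(α + 2)) := by
  have hker := norm_one_sub_ofReal_mul_cpow_neg_le ht hx (γ := α + 2) (by linarith)
  push_cast at hker
  have hα1 : ‖(α:ℂ) + 1‖ = α + 1 := by
    rw [← Complex.ofReal_one, ← Complex.ofReal_add, Complex.norm_real,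
      Real.norm_of_nonneg (by linarith)]
  rw [norm_mul, norm_mul, norm_mul, hα1, Complex.norm_real, Real.norm_of_nonneg ht.1]
  have hα0 : 0 ≤ α + 1 := by linarith
  have hkernel : (α + 1) * t * ‖(1 - t * x) ^ (-((α:ℂ) + 2))‖ ≤
      (α + 1) * 1 * (1 - t * ‖x‖) ^ (-(α + 2)) :=
    mul_le_mul (mul_le_mul_of_nonneg_left ht.2.le hα0) hker (norm_nonneg _) (by positivity)
  rw [mul_one] at hkernel
  rw [mul_assoc δ]
  exact mul_le_mul hw hkernel (mul_nonneg (mul_nonneg hα0 ht.1) (norm_nonneg _))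
    ((norm_nonneg w).trans hw)

lemma rpow_neg_one_sub_mul_le {t s ρ γ : ℝ} (ht : t ∈ Ico (0:ℝ) 1) (hs : 0 ≤ s)
    (hsρ : s ≤ ρ) (hρ : ρ < 1) (hγ : 0 ≤ γ) : (1 - t * s) ^ (-γ) ≤ (1 - ρ) ^ (-γ) :=
  Real.rpow_le_rpow_of_nonpos (by linarith) (by nlinarith [ht.2]) (neg_nonpos.2 hγ)

lemma intHilbert_eq (μ : Measure ℝ) (α : ℝ) (f : ℂ → ℂ) :
    intHilbert μ α f =
      fun z => ∫ t in Ico (0:ℝ) 1, f t * (1 - t * z) ^ (-((α:ℂ) + 1)) ∂μ := by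
  funext z
  simp only [intHilbert, div_eq_mul_inv, Complex.cpow_neg]

lemma hasDerivAt_intHilbert (μ : Measure ℝ) [IsFiniteMeasure μ] {α δ : ℝ} (hα : -1 < α)
    {f : ℂ → ℂ} (hf : AEStronglyMeasurable (fun t : ℝ => f t) (μ.restrict (Ico 0 1)))
    (hδ : ∀ t ∈ Ico (0:ℝ) 1, ‖f t‖ ≤ δ) {z : ℂ} (hz : ‖z‖ < 1) :
    HasDerivAt (intHilbert μ α f)
      (∫ t in Ico (0:ℝ) 1, f t * ((α + 1) * t * (1 - t * z) ^ (-((α:ℂ) + 2))) ∂μ) z := by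
  set ρ := (1 + ‖z‖) / 2
  have hρ : ρ < 1 := by simp only [ρ]; linarith
  have hball : ∀ x ∈ Metric.ball z ((1 - ‖z‖) / 2), ‖x‖ ≤ ρ := fun x hx => by
    have := norm_le_norm_add_norm_sub' x z
    rw [Metric.mem_ball, dist_eq_norm] at hx
    simp only [ρ]; linarith
  have hF_meas : ∀ x : ℂ, AEStronglyMeasurable
      (fun t : ℝ => f t * (1 - t * x) ^ (-((α:ℂ) + 1))) (μ.restrict (Ico 0 1)) := fun x =>
    hf.mul (by fun_prop : Measurable fun t : ℝ =>
      (1 - (t:ℂ) * x) ^ (-((α:ℂ) + 1))).aestronglyMeasurable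
  have hF'_meas : AEStronglyMeasurable
      (fun t : ℝ => f t * ((α + 1) * t * (1 - t * z) ^ (-((α:ℂ) + 2))))
      (μ.restrict (Ico 0 1)) :=
    hf.mul (by fun_prop : Measurable fun t : ℝ =>
      ((α:ℂ) + 1) * t * (1 - t * z) ^ (-((α:ℂ) + 2))).aestronglyMeasurable
  have hε : 0 < (1 - ‖z‖) / 2 := by linarith
  rw [intHilbert_eq]
  refine (hasDerivAt_integral_of_dominated_loc_of_deriv_le
    (F := fun (x : ℂ) (t : ℝ) => f t * (1 - t * x) ^ (-((α:ℂ) + 1)))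
    (F' := fun (x : ℂ) (t : ℝ) => f t * ((α + 1) * t * (1 - t * x) ^ (-((α:ℂ) + 2))))
    (bound := fun _ => δ * (α + 1) * (1 - ρ) ^ (-(α + 2)))
    (Metric.ball_mem_nhds z hε) ?_ ?_ hF'_meas ?_
    (integrable_const _) ?_).2
  · exact Eventually.of_forall hF_meas
  · refine Integrable.of_bound (hF_meas z) (δ * (1 - ‖z‖) ^ (-(α + 1))) ?_
    filter_upwards [ae_restrict_mem measurableSet_Ico] with t ht
    have hker := norm_one_sub_ofReal_mul_cpow_neg_le ht hz (γ := α + 1) (by linarith)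
    push_cast at hker
    rw [norm_mul]
    exact mul_le_mul (hδ t ht) (hker.trans (rpow_neg_one_sub_mul_le ht (norm_nonneg z) le_rfl
      hz (by linarith))) (norm_nonneg _) ((norm_nonneg _).trans (hδ t ht))
  · filter_upwards [ae_restrict_mem measurableSet_Ico] with t ht x hx
    refine (norm_mul_kernel_deriv_le hα ht ((hball x hx).trans_lt hρ) (hδ t ht)).trans ?_
    have := rpow_neg_one_sub_mul_le ht (norm_nonneg x) (hball x hx) hρ (γ := α + 2) (by linarith)
    have hδ0 : 0 ≤ δ * (α + 1) := mul_nonneg ((norm_nonneg _).trans (hδ t ht)) (by linarith)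
    gcongr
  · filter_upwards [ae_restrict_mem measurableSet_Ico] with t ht x hx
    have h := (hasDerivAt_one_sub_mul_cpow_neg ((α:ℂ) + 1) t
      (one_sub_ofReal_mul_mem_slitPlane ht ((hball x hx).trans_lt hρ))).const_mul (f t)
    rwa [add_assoc, one_add_one_eq_two] at h

lemma le_blochNorm_of_mem_ball {ν : ℝ → ℝ} {f : ℂ → ℂ} (hf : MemBloch ν f) {z : ℂ}
    (hz : z ∈ Metric.ball (0:ℂ) 1) : ν ‖z‖ * ‖deriv f z‖ ≤ blochNorm ν f := by
  have := le_ciSup hf.2 ⟨z, hz⟩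
  have := norm_nonneg (f 0)
  rw [blochNorm]
  linarith

lemma norm_apply_zero_le_blochNorm {ν : ℝ → ℝ} (hν : ∀ s ∈ Ico (0:ℝ) 1, 0 ≤ ν s)
    (f : ℂ → ℂ) :
    ‖f 0‖ ≤ blochNorm ν f := by
  refine le_add_of_nonneg_right (Real.iSup_nonneg fun z => mul_nonneg (hν _ ?_) (norm_nonneg _))
  exact ⟨norm_nonneg _, mem_ball_zero_iff.1 z.2⟩

lemma integrable_one_sub_mul_rpow_neg (μ : Measure ℝ) [IsFiniteMeasure μ] {r c : ℝ}
    (hr : r ∈ Ico (0:ℝ) 1) (hc : 0 ≤ c) :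
    Integrable (fun t : ℝ => (1 - t * r) ^ (-c)) (μ.restrict (Ico 0 1)) := by
  refine Integrable.of_bound
    (by fun_prop : Measurable fun t : ℝ => (1 - t * r) ^ (-c)).aestronglyMeasurable
    ((1 - r) ^ (-c)) ?_
  filter_upwards [ae_restrict_mem measurableSet_Ico] with t ht
  rw [Real.norm_of_nonneg (Real.rpow_nonneg (by nlinarith [ht.2, hr.1, hr.2]) _)]
  exact rpow_neg_one_sub_mul_le ht hr.1 le_rfl hr.2 hc

lemma norm_deriv_intHilbert_le (μ : Measure ℝ) [IsFiniteMeasure μ] {α δ : ℝ} (hα : -1 < α)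
    {f : ℂ → ℂ} (hf : AEStronglyMeasurable (fun t : ℝ => f t) (μ.restrict (Ico 0 1)))
    (hδ : ∀ t ∈ Ico (0:ℝ) 1, ‖f t‖ ≤ δ) {z : ℂ} (hz : ‖z‖ < 1) :
    ‖deriv (intHilbert μ α f) z‖ ≤
      δ * (α + 1) * ∫ t in Ico (0:ℝ) 1, (1 - t * ‖z‖) ^ (-(α + 2)) ∂μ := by
  rw [(hasDerivAt_intHilbert μ hα hf hδ hz).deriv, ← integral_const_mul]
  refine norm_integral_le_of_norm_le ((integrable_one_sub_mul_rpow_neg μ ⟨norm_nonneg z, hz⟩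
    (by linarith)).const_mul _) ?_
  filter_upwards [ae_restrict_mem measurableSet_Ico] with t ht
  exact norm_mul_kernel_deriv_le hα ht hz (hδ t ht)

lemma norm_intHilbert_zero_le (μ : Measure ℝ) [IsFiniteMeasure μ] (α : ℝ) {δ : ℝ}
    {f : ℂ → ℂ} (hδ : ∀ t ∈ Ico (0:ℝ) 1, ‖f t‖ ≤ δ) :
    ‖intHilbert μ α f 0‖ ≤ δ * μ.real (Ico 0 1) := by
  have h0 : intHilbert μ α f 0 = ∫ t in Ico (0:ℝ) 1, f t ∂μ := by simp [intHilbert]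
  rw [h0]
  exact norm_setIntegral_le_of_norm_le_const (measure_lt_top μ _) hδ

lemma IsNormal.exists_intHilbert_blochNorm_le {ν : ℝ → ℝ} {a b : ℝ} (hν : IsNormal ν a b)
    (μ : Measure ℝ) [IsFiniteMeasure μ] {α M : ℝ} (hα : -1 < α)
    (hM : ∀ n : ℕ, 1 ≤ n →
      (n : ℝ) ^ (α + 2) * ν (1 - 1 / (n:ℝ)) * ∫ t in Ico (0:ℝ) 1, t ^ n ∂μ ≤ M) :
    ∃ C > 0, ∀ (f : ℂ → ℂ) (δ : ℝ),
      AEStronglyMeasurable (fun t : ℝ => f t) (μ.restrict (Ico 0 1)) →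
      (∀ t ∈ Ico (0:ℝ) 1, ‖f t‖ ≤ δ) →
      MemBloch ν (intHilbert μ α f) ∧ blochNorm ν (intHilbert μ α f) ≤ C * δ := by
  obtain ⟨K, hK⟩ := hν.exists_mul_setIntegral_le μ (c := α + 2) (by linarith) hM
  have hνpos := hν.2.2.1
  have hα1 : 0 < α + 1 := by linarith
  refine ⟨μ.real (Ico 0 1) + (α + 1) * max K 0 + 1, by positivity, fun f δ hf hδ => ?_⟩
  have hδ0 : 0 ≤ δ := (norm_nonneg _).trans (hδ 0 ⟨le_rfl, one_pos⟩)
  have hsup : ∀ z ∈ Metric.ball (0:ℂ) 1,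
      ν ‖z‖ * ‖deriv (intHilbert μ α f) z‖ ≤ (α + 1) * max K 0 * δ := by
    intro z hz
    have hz1 := mem_ball_zero_iff.1 hz
    have hνz := hνpos _ ⟨norm_nonneg z, hz1⟩
    calc ν ‖z‖ * ‖deriv (intHilbert μ α f) z‖
        ≤ ν ‖z‖ * (δ * (α + 1) *
            ∫ t in Ico (0:ℝ) 1, (1 - t * ‖z‖) ^ (-(α + 2)) ∂μ) := by
          gcongr; exact norm_deriv_intHilbert_le μ hα hf hδ hz1
      _ = δ * (α + 1) *
            (ν ‖z‖ * ∫ t in Ico (0:ℝ) 1, (1 - t * ‖z‖) ^ (-(α + 2)) ∂μ) := by ring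
      _ ≤ δ * (α + 1) * max K 0 := by
          gcongr; exact (hK _ ⟨norm_nonneg z, hz1⟩).trans (le_max_left K 0)
      _ = (α + 1) * max K 0 * δ := by ring
  have hmem : MemBloch ν (intHilbert μ α f) :=
    ⟨fun z hz => (hasDerivAt_intHilbert μ hα hf hδ (mem_ball_zero_iff.1 hz)).differentiableAt
        |>.differentiableWithinAt,
      ⟨_, forall_mem_range.2 fun z => hsup z z.2⟩⟩
  refine ⟨hmem, ?_⟩
  have : Nonempty (Metric.ball (0:ℂ) 1) := ⟨⟨0, Metric.mem_ball_self one_pos⟩⟩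
  calc blochNorm ν (intHilbert μ α f)
      ≤ δ * μ.real (Ico 0 1) + (α + 1) * max K 0 * δ :=
        add_le_add (norm_intHilbert_zero_le μ α hδ) (ciSup_le fun z => hsup z z.2)
    _ ≤ (μ.real (Ico 0 1) + (α + 1) * max K 0 + 1) * δ := by nlinarith

lemma one_div_nonneg_ae_restrict_Ioc {ω : ℝ → ℝ} (hω : ∀ s ∈ Ico (0:ℝ) 1, 0 < ω s)
    {c d : ℝ} (hc : 0 ≤ c) (hd : d ≤ 1) : 0 ≤ᵐ[volume.restrict (Ioc c d)] fun s => 1 / ω s := by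
  rw [← Measure.restrict_congr_set Ioo_ae_eq_Ioc]
  filter_upwards [ae_restrict_mem measurableSet_Ioo] with s hs
  exact (one_div_pos.2 (hω s ⟨hc.trans hs.1.le, hs.2.trans_le hd⟩)).le

lemma intervalIntegral_one_div_le {ω : ℝ → ℝ} (hω : ∀ s ∈ Ico (0:ℝ) 1, 0 < ω s)
    (hω1 : IntervalIntegrable (fun s => 1 / ω s) volume 0 1) {a b c d : ℝ} (hc : 0 ≤ c)
    (hca : c ≤ a) (hab : a ≤ b) (hbd : b ≤ d) (hd : d ≤ 1) :
    ∫ s in a..b, 1 / ω s ≤ ∫ s in c..d, 1 / ω s :=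
  intervalIntegral.integral_mono_interval hca hab hbd (one_div_nonneg_ae_restrict_Ioc hω hc hd)
    (hω1.mono_set (uIcc_subset_uIcc (mem_uIcc_of_le hc (hca.trans (hab.trans (hbd.trans hd))))
      (mem_uIcc_of_le (hc.trans (hca.trans (hab.trans hbd))) hd)))

lemma intervalIntegral_one_div_nonneg {ω : ℝ → ℝ} (hω : ∀ s ∈ Ico (0:ℝ) 1, 0 < ω s)
    (hω1 : IntervalIntegrable (fun s => 1 / ω s) volume 0 1) {c d : ℝ} (hc : 0 ≤ c)
    (hcd : c ≤ d) (hd : d ≤ 1) : 0 ≤ ∫ s in c..d, 1 / ω s := by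
  simpa using intervalIntegral_one_div_le hω hω1 hc le_rfl le_rfl hcd hd

lemma MemBloch.norm_sub_le {ω : ℝ → ℝ} (hω : ∀ s ∈ Ico (0:ℝ) 1, 0 < ω s)
    (hω1 : IntervalIntegrable (fun s => 1 / ω s) volume 0 1) {f : ℂ → ℂ}
    (hf : MemBloch ω f) {r t : ℝ} (hr : 0 ≤ r) (hrt : r ≤ t) (ht : t < 1) :
    ‖f t - f r‖ ≤ blochNorm ω f * ∫ s in r..t, 1 / ω s := by
  have hmem : ∀ u ∈ Icc r t, u ∈ Ico (0:ℝ) 1 := fun u hu =>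
    ⟨hr.trans hu.1, hu.2.trans_lt ht⟩
  have hball : ∀ u ∈ Icc r t, (u:ℂ) ∈ Metric.ball (0:ℂ) 1 := fun u hu =>
    ofReal_mem_ball (hmem u hu)
  have hcont : ContinuousOn (fun u : ℝ => deriv f u) (Icc r t) :=
    (hf.1.deriv Metric.isOpen_ball).continuousOn.comp Complex.continuous_ofReal.continuousOn hball
  have hFTC : ∫ u in r..t, deriv f u = f t - f r := by
    refine intervalIntegral.integral_eq_sub_of_hasDerivAt (f := fun u : ℝ => f u) (fun u hu => ?_)
      (hcont.intervalIntegrable_of_Icc hrt)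
    rw [uIcc_of_le hrt] at hu
    exact (hf.1.differentiableAt (Metric.isOpen_ball.mem_nhds (hball u hu))).hasDerivAt.comp_ofReal
  rw [← hFTC, ← intervalIntegral.integral_const_mul]
  refine intervalIntegral.norm_integral_le_of_norm_le hrt (ae_of_all _ fun u hu => ?_)
    ((hω1.mono_set (uIcc_subset_uIcc (mem_uIcc_of_le hr (hrt.trans ht.le))
      (mem_uIcc_of_le (hr.trans hrt) ht.le))).const_mul _)
  have hu' : u ∈ Icc r t := Ioc_subset_Icc_self hu
  have hle := le_blochNorm_of_mem_ball hf (hball u hu')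
  rw [Complex.norm_real, Real.norm_of_nonneg (hmem u hu').1] at hle
  rw [mul_one_div, le_div_iff₀ (hω u (hmem u hu'))]
  linarith

lemma MemBloch.norm_le {ω : ℝ → ℝ} (hω : ∀ s ∈ Ico (0:ℝ) 1, 0 < ω s)
    (hω1 : IntervalIntegrable (fun s => 1 / ω s) volume 0 1) {f : ℂ → ℂ}
    (hf : MemBloch ω f) {t : ℝ} (ht : t ∈ Ico (0:ℝ) 1) :
    ‖f t‖ ≤ (1 + ∫ s in (0:ℝ)..1, 1 / ω s) * blochNorm ω f := by
  have h0 := norm_apply_zero_le_blochNorm (fun s hs => (hω s hs).le) f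
  have hsub := hf.norm_sub_le hω hω1 le_rfl ht.1 ht.2
  have hint := intervalIntegral_one_div_le hω hω1 le_rfl le_rfl ht.1 ht.2.le le_rfl
  rw [Complex.ofReal_zero] at hsub
  have hN : 0 ≤ blochNorm ω f := (norm_nonneg _).trans h0
  calc ‖f t‖ ≤ ‖f 0‖ + ‖f t - f 0‖ := norm_le_norm_add_norm_sub' _ _
    _ ≤ blochNorm ω f + blochNorm ω f * ∫ s in (0:ℝ)..1, 1 / ω s := by
        gcongr; exact hsub.trans (by gcongr)
    _ = (1 + ∫ s in (0:ℝ)..1, 1 / ω s) * blochNorm ω f := by ring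

lemma tendsto_intervalIntegral_nhdsLT {f : ℝ → ℝ} {a b : ℝ} (hab : a < b)
    (hf : IntervalIntegrable f volume a b) :
    Tendsto (fun r => ∫ s in r..b, f s) (𝓝[<] b) (𝓝 0) := by
  have h := intervalIntegral.continuousOn_primitive_interval_left
    ((intervalIntegrable_iff_integrableOn_Icc_of_le hab.le).1 hf
      |>.mono_set (uIcc_of_le hab.le).subset)
    b right_mem_uIcc
  have hmem : uIcc a b ∈ 𝓝[<] b :=
    mem_of_superset (Ioo_mem_nhdsLT hab) (Ioo_subset_Icc_self.trans (uIcc_of_le hab.le).symm.subset)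
  simpa using (h.mono_of_mem_nhdsWithin hmem).tendsto

lemma eventually_forall_norm_le_of_tendstoLocallyUniformlyOn {ω : ℝ → ℝ}
    (hω : ∀ s ∈ Ico (0:ℝ) 1, 0 < ω s)
    (hω1 : IntervalIntegrable (fun s => 1 / ω s) volume 0 1) {h : ℕ → ℂ → ℂ} {M : ℝ}
    (hmem : ∀ k, MemBloch ω (h k) ∧ blochNorm ω (h k) ≤ M)
    (hconv : TendstoLocallyUniformlyOn (fun k z => h k z) (fun _ => 0) atTop
      (Metric.ball (0:ℂ) 1))
    {δ : ℝ} (hδ : 0 < δ) : ∀ᶠ k in atTop, ∀ t ∈ Ico (0:ℝ) 1, ‖h k t‖ ≤ δ := by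
  have htail := (tendsto_intervalIntegral_nhdsLT one_pos hω1).const_mul (max M 0)
  rw [mul_zero] at htail
  obtain ⟨r, hr, ⟨hr0, hr1⟩⟩ :=
    ((htail.eventually (gt_mem_nhds (half_pos hδ))).and (Ioo_mem_nhdsLT one_pos)).exists
  set K := (fun x : ℝ => (x:ℂ)) '' Icc 0 r
  have hK : K ⊆ Metric.ball (0:ℂ) 1 := by
    rintro _ ⟨u, hu, rfl⟩
    exact ofReal_mem_ball ⟨hu.1, hu.2.trans_lt hr1⟩
  have hunif := (tendstoLocallyUniformlyOn_iff_forall_isCompact Metric.isOpen_ball).1 hconv K hK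
    (isCompact_Icc.image Complex.continuous_ofReal)
  filter_upwards [Metric.tendstoUniformlyOn_iff.1 hunif (δ / 2) (half_pos hδ)] with k hk t ht
  have hsmall : ∀ u ∈ Icc 0 r, ‖h k u‖ < δ / 2 := fun u hu => by
    simpa using hk u ⟨u, hu, rfl⟩
  rcases le_or_gt t r with htr | hrt
  · linarith [hsmall t ⟨ht.1, htr⟩]
  have hdiff : ‖h k t - h k r‖ ≤ max M 0 * ∫ s in r..1, 1 / ω s :=
    ((hmem k).1.norm_sub_le hω hω1 hr0.le hrt.le ht.2).trans (mul_le_mul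
      ((hmem k).2.trans (le_max_left M 0))
      (intervalIntegral_one_div_le hω hω1 hr0.le le_rfl hrt.le ht.2.le le_rfl)
      (intervalIntegral_one_div_nonneg hω hω1 hr0.le hrt.le ht.2.le) (le_max_right M 0))
  calc ‖h k t‖ ≤ ‖h k r‖ + ‖h k t - h k r‖ := norm_le_norm_add_norm_sub' _ _
    _ ≤ δ := by linarith [hsmall r ⟨hr0.le, le_rfl⟩]

lemma DifferentiableOn.aestronglyMeasurable_comp_ofReal {f : ℂ → ℂ}
    (hf : DifferentiableOn ℂ f (Metric.ball 0 1)) (μ : Measure ℝ) :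
    AEStronglyMeasurable (fun t : ℝ => f t) (μ.restrict (Ico 0 1)) :=
  (hf.continuousOn.comp Complex.continuous_ofReal.continuousOn
    fun _ ht => ofReal_mem_ball ht).aestronglyMeasurable measurableSet_Ico

theorem stmt15 (ω ν : ℝ → ℝ) (a b a' b' : ℝ) (hω : IsNormal ω a b) (hν : IsNormal ν a' b')
    (μ : Measure ℝ) [IsFiniteMeasure μ] (α : ℝ) (hα : -1 < α)
    (hω1 : IntervalIntegrable (fun s => 1 / ω s) MeasureTheory.volume 0 1)
    (h : ∃ M : ℝ, ∀ n : ℕ, 1 ≤ n →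
      (n : ℝ) ^ (α + 2) * ν (1 - 1 / (n:ℝ)) * ∫ t in Ico (0:ℝ) 1, t ^ n ∂μ ≤ M) :
    IsCompactOp ω ν (intHilbert μ α) := by
  obtain ⟨M, hM⟩ := h
  obtain ⟨C, hC, hI⟩ := hν.exists_intHilbert_blochNorm_le μ hα hM
  have hωpos : ∀ s ∈ Ico (0:ℝ) 1, 0 < ω s := hω.2.2.1
  have hW := intervalIntegral_one_div_nonneg hωpos hω1 le_rfl zero_le_one le_rfl
  refine ⟨⟨C * (1 + ∫ s in (0:ℝ)..1, 1 / ω s), mul_pos hC (by linarith), fun f hf => ?_⟩,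
    fun g N hg hconv => tendsto_order.2 ⟨fun ε hε => Eventually.of_forall fun k => ?_,
      fun ε hε => ?_⟩⟩
  · obtain ⟨hmem, hle⟩ := hI f _ (hf.1.aestronglyMeasurable_comp_ofReal μ)
      fun t ht => hf.norm_le hωpos hω1 ht
    exact ⟨hmem, hle.trans_eq (mul_assoc _ _ _).symm⟩
  · exact hε.trans_le <| (norm_nonneg _).trans <|
      norm_apply_zero_le_blochNorm (fun s hs => (hν.2.2.1 s hs).le) _
  · filter_upwards [eventually_forall_norm_le_of_tendstoLocallyUniformlyOn hωpos hω1 hg hconv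
      (div_pos hε (mul_pos two_pos hC))] with k hk
    calc blochNorm ν (intHilbert μ α (g k)) ≤ C * (ε / (2 * C)) :=
          (hI _ _ ((hg k).1.1.aestronglyMeasurable_comp_ofReal μ) hk).2
      _ < ε := by field_simp; linarith
end

section
/- Let α > -1, β > -1, γ ∈ ℝ, and let μ be a positive Borel measure on [0,1). If μ([t,1)) (log(e/(1-t)))^{β+1-γ} ≤ C(1-t)^{α+1} for all t ∈ [0,1), then sup_{n≥1} n^{α+1} (log(n+1))^{-γ} ∫_0^1 t^n (log(e/(1-t)))^{β+1} dμ(t) < ∞. Conversely, if the supremum is finite then μ([t,1)) (log(e/(1-t)))^{β+1-γ} ≤ C(1-t)^{α+1} for all t. -/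
open MeasureTheory Set Filter

/-! Write `L t = log (e / (1 - t))` and `φₙ t = tⁿ L(t)^(β+1)`. Since `φₙ 0 = 0` and `φₙ' ≥ 0`,
Tonelli gives `∫ φₙ dμ = ∫₀¹ φₙ'(s) μ((s,1)) ds`. Under the tail bound, `φₙ'(s) μ([s,1))` is
dominated by `s^(n-1) L(s)^γ (n (1-s)^(α+1) + (β+1) (1-s)^α)`, and the moments
`∫₀¹ s^k (1-s)^a L(s)^δ ds ≲ (1 + log (k+1))^δ / (k+1)^(a+1)` follow by substituting
`v = (k+1)(1-s)`: `L(s)` and `1 + log (k+1)` differ by at most the factor `1 + |log v|`, which is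
absorbed into `v^ε + v^(-ε)`, leaving two Gamma integrals.

Conversely `∫ φₙ dμ ≥ φₙ(t) μ([t,1))` by monotonicity, and `n = ⌈1/(1-t)⌉` makes `tⁿ ≥ e⁻⁴` (for
`t ≥ 1/2`) and `log (n+1) ≍ L(t)`. For `t < 1/2` it suffices that `μ([0,1)) < ∞`, which holds
because `L^β / (1-t) ≥ L^(β+1) ≥ 1`. -/

open scoped ENNReal

theorem rpow_le_mul_rpow_of_le_mul {x y c : ℝ} (hx : 0 < x) (hy : 0 < y)
    (hxy : x ≤ c * y) (hyx : y ≤ c * x) (δ : ℝ) : x ^ δ ≤ c ^ |δ| * y ^ δ := by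
  have hc : 0 < c := by nlinarith
  rcases le_or_gt 0 δ with hδ | hδ
  · rw [abs_of_nonneg hδ, ← Real.mul_rpow hc.le hy.le]
    exact Real.rpow_le_rpow hx.le hxy hδ
  · rw [abs_of_neg hδ, Real.rpow_neg hc.le, ← div_eq_inv_mul, ← Real.div_rpow hy.le hc.le]
    exact Real.rpow_le_rpow_of_nonpos (div_pos hy hc) (by rwa [div_le_iff₀' hc]) hδ.le

theorem one_add_log_rpow_le_mul_log_add_one_rpow {x y : ℝ} (hx : 1 ≤ x) (hxy : x ≤ y)
    (hyx : y ≤ 2 * x) (δ : ℝ) :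
    (1 + Real.log x) ^ δ ≤ 3 ^ |δ| * Real.log (y + 1) ^ δ := by
  have hlog2 : 1 ≤ 2 * Real.log 2 := by linarith [Real.log_two_gt_d9]
  have hlog3 : Real.log 3 ≤ 2 := by linarith [Real.log_le_sub_one_of_pos (by norm_num : (0:ℝ) < 3)]
  have hlogx : 0 ≤ Real.log x := Real.log_nonneg hx
  have hx_le : Real.log x ≤ Real.log (y + 1) := Real.log_le_log (by linarith) (by linarith)
  have h2_le : Real.log 2 ≤ Real.log (y + 1) := Real.log_le_log (by norm_num) (by linarith)
  have hy_le : Real.log (y + 1) ≤ Real.log 3 + Real.log x := by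
    rw [← Real.log_mul (by norm_num) (by linarith)]
    exact Real.log_le_log (by linarith) (by linarith)
  exact rpow_le_mul_rpow_of_le_mul (by linarith) (by linarith) (by linarith) (by linarith) δ

theorem one_add_rpow_le_mul_exp {m ε : ℝ} (hm : 0 ≤ m) (hε : 0 < ε) :
    ∃ D > 0, ∀ y, 0 ≤ y → (1 + y) ^ m ≤ D * Real.exp (ε * y) := by
  set k := max 1 (m / ε)
  have hk : 1 ≤ k := le_max_left _ _
  have hmk : m ≤ ε * k := by
    have := le_max_right 1 (m / ε)
    rwa [div_le_iff₀' hε] at this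
  refine ⟨k ^ m, by positivity, fun y hy => ?_⟩
  have hbase : 1 + y ≤ k * Real.exp (y / k) := by
    have := Real.add_one_le_exp (y / k)
    calc 1 + y ≤ k * (y / k + 1) := by field_simp; linarith
      _ ≤ k * Real.exp (y / k) := by gcongr
  calc (1 + y) ^ m ≤ (k * Real.exp (y / k)) ^ m := by gcongr
    _ = k ^ m * Real.exp (y / k * m) := by
      rw [Real.mul_rpow (by positivity) (by positivity), Real.exp_mul]
    _ ≤ k ^ m * Real.exp (ε * y) := by
      refine mul_le_mul_of_nonneg_left (Real.exp_le_exp.mpr ?_) (by positivity)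
      rw [div_mul_eq_mul_div, div_le_iff₀ (by positivity)]
      nlinarith

theorem exp_mul_abs_log_le_rpow_add_rpow_neg {v : ℝ} (hv : 0 < v) (ε : ℝ) :
    Real.exp (ε * |Real.log v|) ≤ v ^ ε + v ^ (-ε) := by
  have hpos := Real.rpow_pos_of_pos hv ε
  have hneg := Real.rpow_pos_of_pos hv (-ε)
  rcases abs_cases (Real.log v) with ⟨h, _⟩ | ⟨h, _⟩
  · rw [h, mul_comm, ← Real.rpow_def_of_pos hv]; linarith
  · rw [h, show ε * -Real.log v = Real.log v * -ε by ring, ← Real.rpow_def_of_pos hv]; linarith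

theorem one_add_abs_log_rpow_le {m ε : ℝ} (hm : 0 ≤ m) (hε : 0 < ε) :
    ∃ D > 0, ∀ v, 0 < v → (1 + |Real.log v|) ^ m ≤ D * (v ^ ε + v ^ (-ε)) := by
  obtain ⟨D, hD, hbound⟩ := one_add_rpow_le_mul_exp hm hε
  exact ⟨D, hD, fun v hv => (hbound _ (abs_nonneg _)).trans
    (mul_le_mul_of_nonneg_left (exp_mul_abs_log_le_rpow_add_rpow_neg hv ε) hD.le)⟩

noncomputable def logWeight (t : ℝ) : ℝ := Real.log (Real.exp 1 / (1 - t))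

namespace logWeight

variable {t : ℝ}

theorem eq_one_sub_log (ht : t < 1) : logWeight t = 1 - Real.log (1 - t) := by
  rw [logWeight, Real.log_div (Real.exp_ne_zero 1) (by linarith), Real.log_exp]

theorem eq_one_add_log_inv (ht : t < 1) : logWeight t = 1 + Real.log (1 - t)⁻¹ := by
  rw [eq_one_sub_log ht, Real.log_inv, sub_eq_add_neg]

theorem one_le (h0 : 0 ≤ t) (h1 : t < 1) : 1 ≤ logWeight t := by
  rw [eq_one_sub_log h1]
  linarith [Real.log_nonpos (by linarith : 0 ≤ 1 - t) (by linarith)]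

theorem pos (h0 : 0 ≤ t) (h1 : t < 1) : 0 < logWeight t :=
  one_pos.trans_le (one_le h0 h1)

theorem le_inv_one_sub (h1 : t < 1) : logWeight t ≤ (1 - t)⁻¹ := by
  rw [eq_one_add_log_inv h1]
  linarith [Real.log_le_sub_one_of_pos (inv_pos.mpr (by linarith : 0 < 1 - t))]

theorem monotoneOn : MonotoneOn logWeight (Iio 1) := by
  intro s hs t ht hst
  rw [eq_one_sub_log hs, eq_one_sub_log ht]
  linarith [Real.log_le_log (by linarith [mem_Iio.mp ht] : 0 < 1 - t) (by linarith : 1 - t ≤ 1 - s)]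

@[fun_prop]
theorem measurable : Measurable logWeight := by
  unfold logWeight; fun_prop

theorem hasDerivAt (ht : t < 1) : HasDerivAt logWeight (1 - t)⁻¹ t := by
  have h : HasDerivAt (fun y => 1 - Real.log (1 - y)) (1 - t)⁻¹ t := by
    refine ((((hasDerivAt_id t).const_sub 1).log (by simp; linarith)).const_sub 1).congr_deriv ?_
    simp [div_eq_mul_inv]
  exact h.congr_of_eventuallyEq (eventually_lt_nhds ht |>.mono fun y hy => eq_one_sub_log hy)

theorem one_le_rpow {p : ℝ} (hp : 0 ≤ p) (h0 : 0 ≤ t) (h1 : t < 1) : 1 ≤ logWeight t ^ p :=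
  Real.one_le_rpow (one_le h0 h1) hp

theorem rpow_add_one_le {β : ℝ} (h0 : 0 ≤ t) (h1 : t < 1) :
    logWeight t ^ (β + 1) ≤ logWeight t ^ β / (1 - t) := by
  rw [Real.rpow_add_one (pos h0 h1).ne', div_eq_mul_inv]
  exact mul_le_mul_of_nonneg_left (le_inv_one_sub h1) (Real.rpow_nonneg (pos h0 h1).le β)

end logWeight

theorem integrableOn_and_integral_le_of_le_comp_mul_one_sub {f G : ℝ → ℝ} (hf : Measurable f)
    (hf0 : ∀ s ∈ Ioo (0 : ℝ) 1, 0 ≤ f s) (hG : IntegrableOn G (Ioi 0))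
    (hG0 : ∀ v, 0 < v → 0 ≤ G v) {c ν : ℝ} (hc : 0 ≤ c) (hν : 0 < ν)
    (hfG : ∀ s ∈ Ioo (0 : ℝ) 1, f s ≤ c * G (ν * (1 - s))) :
    IntegrableOn f (Ioo 0 1) ∧ ∫ s in Ioo 0 1, f s ≤ c * (ν⁻¹ * ∫ v in Ioi 0, G v) := by
  have hGν : IntervalIntegrable G volume 0 ν :=
    (intervalIntegrable_iff_integrableOn_Ioc_of_le hν.le).mpr (hG.mono_set Ioc_subset_Ioi_self)
  have hsub : IntegrableOn (fun s => G (ν * (1 - s))) (Ioo 0 1) := by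
    have : IntervalIntegrable (fun s => G (ν * (1 - s))) volume 0 1 := by
      simpa [hν.ne'] using ((hGν.comp_mul_left (c := ν)).comp_sub_left 1).symm
    exact this.1.mono_set Ioo_subset_Ioc_self
  have heq : ∫ s in Ioo 0 1, G (ν * (1 - s)) = ν⁻¹ * ∫ v in 0..ν, G v := by
    rw [← integral_Ioc_eq_integral_Ioo, ← intervalIntegral.integral_of_le zero_le_one,
      intervalIntegral.integral_comp_sub_left (fun u => G (ν * u)),
      intervalIntegral.integral_comp_mul_left G hν.ne']
    simp
  have hint : IntegrableOn f (Ioo 0 1) :=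
    (hsub.const_mul c).mono' hf.aestronglyMeasurable ((ae_restrict_mem measurableSet_Ioo).mono
      fun s hs => (Real.norm_of_nonneg (hf0 s hs)).trans_le (hfG s hs))
  refine ⟨hint, (setIntegral_mono_on hint (hsub.const_mul c) measurableSet_Ioo hfG).trans ?_⟩
  rw [integral_const_mul, heq, intervalIntegral.integral_of_le hν.le]
  exact mul_le_mul_of_nonneg_left (mul_le_mul_of_nonneg_left (setIntegral_mono_set hG
    ((ae_restrict_mem measurableSet_Ioi).mono hG0) Ioc_subset_Ioi_self.eventuallyLE)
    (inv_nonneg.mpr hν.le)) hc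

theorem pow_le_exp_one_mul_exp_neg {s : ℝ} (hs : 0 ≤ s) (k : ℕ) :
    s ^ k ≤ Real.exp 1 * Real.exp (-((k + 1) * (1 - s))) := by
  have hs_le : s ≤ Real.exp (-(1 - s)) := by linarith [Real.add_one_le_exp (-(1 - s))]
  calc s ^ k ≤ Real.exp (-(1 - s)) ^ k := pow_le_pow_left₀ hs hs_le k
    _ = Real.exp (-(k * (1 - s))) := by rw [← Real.exp_nat_mul]; ring_nf
    _ ≤ Real.exp 1 * Real.exp (-((k + 1) * (1 - s))) := by
      rw [← Real.exp_add]; exact Real.exp_le_exp.mpr (by nlinarith)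

theorem logWeight_rpow_le {ν s : ℝ} (hν : 1 ≤ ν) (hs0 : 0 ≤ s) (hs1 : s < 1) (δ : ℝ) :
    logWeight s ^ δ ≤ (1 + |Real.log (ν * (1 - s))|) ^ |δ| * (1 + Real.log ν) ^ δ := by
  have hx : 0 ≤ -Real.log (1 - s) := by
    linarith [Real.log_nonpos (by linarith : 0 ≤ 1 - s) (by linarith)]
  have hb : 0 ≤ Real.log ν := Real.log_nonneg hν
  have habs : |Real.log (ν * (1 - s))| = |-Real.log (1 - s) - Real.log ν| := by
    rw [Real.log_mul (by linarith) (by linarith), ← abs_neg]; ring_nf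
  rw [logWeight.eq_one_sub_log hs1, habs]
  have h1 := le_abs_self (-Real.log (1 - s) - Real.log ν)
  have h2 := neg_abs_le (-Real.log (1 - s) - Real.log ν)
  exact rpow_le_mul_rpow_of_le_mul (by linarith) (by linarith) (by nlinarith) (by nlinarith) δ

theorem pow_mul_one_sub_rpow_mul_logWeight_rpow_le {a δ ε D : ℝ}
    (hlog : ∀ v, 0 < v → (1 + |Real.log v|) ^ |δ| ≤ D * (v ^ ε + v ^ (-ε))) (k : ℕ) {s : ℝ}
    (hs : s ∈ Ioo (0 : ℝ) 1) :
    s ^ k * (1 - s) ^ a * logWeight s ^ δ ≤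
      Real.exp 1 * D * (1 + Real.log (k + 1)) ^ δ * ((k : ℝ) + 1) ^ (-a) *
        (Real.exp (-((k + 1) * (1 - s))) *
          (((k + 1) * (1 - s)) ^ (a + ε) + ((k + 1) * (1 - s)) ^ (a - ε))) := by
  obtain ⟨hs0, hs1⟩ := hs
  set ν : ℝ := k + 1
  have hν : 1 ≤ ν := by simp [ν]
  have hν0 : 0 < ν := by linarith
  set v := ν * (1 - s)
  have hv : 0 < v := mul_pos hν0 (by linarith)
  have hpow : s ^ k ≤ Real.exp 1 * Real.exp (-v) := pow_le_exp_one_mul_exp_neg hs0.le k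
  have hone : (1 - s) ^ a = ν ^ (-a) * v ^ a := by
    rw [Real.mul_rpow hν0.le (by linarith), ← mul_assoc, ← Real.rpow_add hν0]; simp
  have hL : logWeight s ^ δ ≤ D * (v ^ ε + v ^ (-ε)) * (1 + Real.log ν) ^ δ :=
    (logWeight_rpow_le hν hs0.le hs1 δ).trans
      (mul_le_mul_of_nonneg_right (hlog v hv) (by have := Real.log_nonneg hν; positivity))
  have := logWeight.pos hs0.le hs1
  calc s ^ k * (1 - s) ^ a * logWeight s ^ δ
      ≤ Real.exp 1 * Real.exp (-v) * (ν ^ (-a) * v ^ a) *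
          (D * (v ^ ε + v ^ (-ε)) * (1 + Real.log ν) ^ δ) := by
        rw [← hone]; gcongr
    _ = _ := by
        simp only [sub_eq_add_neg a ε, Real.rpow_add hv]
        ring

theorem integral_pow_mul_one_sub_rpow_mul_logWeight_rpow_le {a : ℝ} (ha : -1 < a) (δ : ℝ) :
    ∃ K ≥ 0, ∀ k : ℕ,
      IntegrableOn (fun s => s ^ k * (1 - s) ^ a * logWeight s ^ δ) (Ioo 0 1) ∧
      ∫ s in Ioo 0 1, s ^ k * (1 - s) ^ a * logWeight s ^ δ ≤
        K * (1 + Real.log (k + 1)) ^ δ / (k + 1) ^ (a + 1) := by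
  set ε := (a + 1) / 2
  have hε : 0 < ε := by simp only [ε]; linarith
  obtain ⟨D, hD, hlog⟩ := one_add_abs_log_rpow_le (abs_nonneg δ) hε
  set G : ℝ → ℝ := fun v => Real.exp (-v) * (v ^ (a + ε) + v ^ (a - ε))
  have hG : IntegrableOn G (Ioi 0) := by
    have g₁ := Real.GammaIntegral_convergent (s := a + ε + 1) (by linarith)
    have g₂ := Real.GammaIntegral_convergent (s := a - ε + 1) (by simp only [ε]; linarith)
    rw [add_sub_cancel_right] at g₁ g₂
    refine (g₁.add g₂).congr_fun (fun v _ => ?_) measurableSet_Ioi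
    simp only [G, Pi.add_apply, mul_add]
  have hG0 : ∀ v, 0 < v → 0 ≤ G v := fun v hv => by positivity
  have hIG : 0 ≤ ∫ v in Ioi 0, G v := setIntegral_nonneg measurableSet_Ioi hG0
  refine ⟨Real.exp 1 * D * ∫ v in Ioi 0, G v, by positivity, fun k => ?_⟩
  have hν0 : (0 : ℝ) < k + 1 := by positivity
  have hc : 0 ≤ Real.exp 1 * D * (1 + Real.log (k + 1)) ^ δ * ((k : ℝ) + 1) ^ (-a) := by
    have := Real.log_nonneg (by simp : (1 : ℝ) ≤ k + 1); positivity
  obtain ⟨hint, hle⟩ := integrableOn_and_integral_le_of_le_comp_mul_one_sub (by fun_prop)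
    (fun s hs => mul_nonneg (mul_nonneg (pow_nonneg hs.1.le k)
      (Real.rpow_nonneg (by linarith [hs.2]) a)) (Real.rpow_nonneg (logWeight.pos hs.1.le hs.2).le δ))
    hG hG0 hc hν0 fun s hs => pow_mul_one_sub_rpow_mul_logWeight_rpow_le hlog k hs
  refine ⟨hint, hle.trans_eq ?_⟩
  rw [Real.rpow_neg hν0.le, Real.rpow_add_one hν0.ne']
  field_simp

theorem lintegral_lintegral_Iio_eq (μ ρ : Measure ℝ) [SFinite μ] [SFinite ρ] {f : ℝ → ℝ≥0∞}
    (hf : Measurable f) :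
    ∫⁻ t, ∫⁻ s in Iio t, f s ∂ρ ∂μ = ∫⁻ s, f s * μ (Ioi s) ∂ρ := by
  simp_rw [← lintegral_indicator measurableSet_Iio]
  rw [lintegral_lintegral_swap]
  · congr 1
    funext s
    rw [← lintegral_indicator_const measurableSet_Ioi]
    rfl
  · have : Function.uncurry (fun t s => (Iio t).indicator f s) =
        fun p : ℝ × ℝ => if p.2 < p.1 then f p.2 else 0 := by
      funext p; simp [indicator, Function.uncurry]
    rw [this]
    exact (Measurable.ite (measurableSet_lt measurable_snd measurable_fst)
      (hf.comp measurable_snd) measurable_const).aemeasurable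

theorem lintegral_ofReal_eq_lintegral_mul_measure_Ioi {μ : Measure ℝ} (hfin : μ (Ico 0 1) ≠ ∞)
    {φ ψ : ℝ → ℝ} (hψ : Measurable ψ) (hψ0 : ∀ s ∈ Ioo (0 : ℝ) 1, 0 ≤ ψ s)
    (hψint : ∀ t ∈ Ico (0 : ℝ) 1, IntegrableOn ψ (Ioo 0 t))
    (hφ : ∀ t ∈ Ico (0 : ℝ) 1, φ t = ∫ s in Ioo 0 t, ψ s) :
    ∫⁻ t in Ico 0 1, ENNReal.ofReal (φ t) ∂μ =
      ∫⁻ s in Ioo 0 1, ENNReal.ofReal (ψ s) * μ.restrict (Ico 0 1) (Ioi s) := by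
  have := isFiniteMeasure_restrict.mpr hfin
  rw [← lintegral_lintegral_Iio_eq _ _ (by fun_prop)]
  refine setLIntegral_congr_fun measurableSet_Ico fun t ht => ?_
  rw [Measure.restrict_restrict measurableSet_Iio, Iio_inter_Ioo, min_eq_left ht.2.le,
    hφ t ht, ofReal_integral_eq_lintegral_ofReal (hψint t ht)
      ((ae_restrict_mem measurableSet_Ioo).mono fun s hs => hψ0 s ⟨hs.1, hs.2.trans ht.2⟩)]

theorem setIntegral_Ico_le_of_mul_measure_Ico_le {μ : Measure ℝ} (hfin : μ (Ico 0 1) ≠ ∞)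
    {φ ψ h : ℝ → ℝ} (hψ : Measurable ψ) (hψ0 : ∀ s ∈ Ioo (0 : ℝ) 1, 0 ≤ ψ s)
    (hψint : ∀ t ∈ Ico (0 : ℝ) 1, IntegrableOn ψ (Ioo 0 t))
    (hφ : ∀ t ∈ Ico (0 : ℝ) 1, φ t = ∫ s in Ioo 0 t, ψ s) (hφint : IntegrableOn φ (Ico 0 1) μ)
    (hh : IntegrableOn h (Ioo 0 1)) (hψh : ∀ s ∈ Ioo (0 : ℝ) 1, ψ s * μ.real (Ico s 1) ≤ h s) :
    ∫ t in Ico 0 1, φ t ∂μ ≤ ∫ s in Ioo 0 1, h s := by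
  have hφ0 : ∀ t ∈ Ico (0 : ℝ) 1, 0 ≤ φ t := fun t ht => hφ t ht ▸
    setIntegral_nonneg measurableSet_Ioo fun s hs => hψ0 s ⟨hs.1, hs.2.trans ht.2⟩
  have hh0 : ∀ s ∈ Ioo (0 : ℝ) 1, 0 ≤ h s := fun s hs =>
    (mul_nonneg (hψ0 s hs) measureReal_nonneg).trans (hψh s hs)
  have hpt : ∀ s ∈ Ioo (0 : ℝ) 1,
      ENNReal.ofReal (ψ s) * μ.restrict (Ico 0 1) (Ioi s) ≤ ENNReal.ofReal (h s) := by
    intro s hs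
    have hsub : Ioi s ∩ Ico 0 1 ⊆ Ico s 1 := fun x hx => ⟨hx.1.le, hx.2.2⟩
    have hne : μ (Ico s 1) ≠ ∞ :=
      ne_top_of_le_ne_top hfin (measure_mono (Ico_subset_Ico_left hs.1.le))
    rw [Measure.restrict_apply measurableSet_Ioi]
    calc ENNReal.ofReal (ψ s) * μ (Ioi s ∩ Ico 0 1)
        ≤ ENNReal.ofReal (ψ s) * ENNReal.ofReal (μ.real (Ico s 1)) := by
          rw [ofReal_measureReal hne]; exact mul_le_mul_right (measure_mono hsub) _
      _ ≤ ENNReal.ofReal (h s) := by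
          rw [← ENNReal.ofReal_mul (hψ0 s hs)]; exact ENNReal.ofReal_le_ofReal (hψh s hs)
  rw [← ENNReal.ofReal_le_ofReal_iff (setIntegral_nonneg measurableSet_Ioo hh0),
    ofReal_integral_eq_lintegral_ofReal hφint ((ae_restrict_mem measurableSet_Ico).mono hφ0),
    ofReal_integral_eq_lintegral_ofReal hh ((ae_restrict_mem measurableSet_Ioo).mono hh0),
    lintegral_ofReal_eq_lintegral_mul_measure_Ioi hfin hψ hψ0 hψint hφ]
  exact setLIntegral_mono' measurableSet_Ioo hpt

noncomputable def powLogWeightDeriv (β : ℝ) (k : ℕ) (s : ℝ) : ℝ :=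
  s ^ k * logWeight s ^ β * ((k + 1) * logWeight s + (β + 1) * s / (1 - s))

section powLogWeight

variable {β s : ℝ} {k : ℕ}

theorem hasDerivAt_pow_succ_mul_logWeight_rpow (hs0 : 0 ≤ s) (hs1 : s < 1) :
    HasDerivAt (fun t => t ^ (k + 1) * logWeight t ^ (β + 1)) (powLogWeightDeriv β k s) s := by
  have hL := logWeight.pos hs0 hs1
  refine ((hasDerivAt_pow (k + 1) s).mul ((logWeight.hasDerivAt hs1).rpow_const
    (Or.inl hL.ne'))).congr_deriv ?_
  rw [add_sub_cancel_right, Real.rpow_add_one hL.ne', powLogWeightDeriv, pow_succ]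
  push_cast
  field_simp

theorem powLogWeightDeriv_nonneg (hβ : -1 < β) (hs0 : 0 ≤ s) (hs1 : s < 1) :
    0 ≤ powLogWeightDeriv β k s := by
  have := logWeight.pos hs0 hs1
  have : 0 < 1 - s := by linarith
  unfold powLogWeightDeriv
  have : 0 ≤ β + 1 := by linarith
  positivity

theorem powLogWeightDeriv_le (hβ : -1 < β) (hs0 : 0 ≤ s) (hs1 : s < 1) :
    powLogWeightDeriv β k s ≤ s ^ k * logWeight s ^ (β + 1) * ((k + 1) + (β + 1) / (1 - s)) := by
  have hL := logWeight.pos hs0 hs1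
  have h1s : 0 < 1 - s := by linarith
  have hsL : s ≤ logWeight s := by linarith [logWeight.one_le hs0 hs1]
  rw [powLogWeightDeriv, Real.rpow_add_one hL.ne', mul_assoc (s ^ k), mul_assoc (s ^ k)]
  refine mul_le_mul_of_nonneg_left ?_ (pow_nonneg hs0 k)
  have key : (k + 1) * logWeight s + (β + 1) * s / (1 - s) ≤
      logWeight s * ((k + 1) + (β + 1) / (1 - s)) := by
    have : (β + 1) * s / (1 - s) ≤ logWeight s * ((β + 1) / (1 - s)) := by
      rw [← mul_div_assoc, mul_comm (logWeight s)]
      gcongr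
      linarith
    linarith [mul_comm ((k : ℝ) + 1) (logWeight s)]
  calc logWeight s ^ β * ((k + 1) * logWeight s + (β + 1) * s / (1 - s))
      ≤ logWeight s ^ β * (logWeight s * ((k + 1) + (β + 1) / (1 - s))) :=
        mul_le_mul_of_nonneg_left key (Real.rpow_nonneg hL.le β)
    _ = _ := by ring

theorem integrableOn_powLogWeightDeriv_and_eq_integral (hβ : -1 < β) {t : ℝ}
    (ht : t ∈ Ico (0 : ℝ) 1) :
    IntegrableOn (powLogWeightDeriv β k) (Ioo 0 t) ∧
      t ^ (k + 1) * logWeight t ^ (β + 1) = ∫ s in Ioo 0 t, powLogWeightDeriv β k s := by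
  have hderiv : ∀ x ∈ Icc 0 t, HasDerivAt (fun t => t ^ (k + 1) * logWeight t ^ (β + 1))
      (powLogWeightDeriv β k x) x :=
    fun x hx => hasDerivAt_pow_succ_mul_logWeight_rpow hx.1 (hx.2.trans_lt ht.2)
  have hcont : ContinuousOn (fun t => t ^ (k + 1) * logWeight t ^ (β + 1)) (Icc 0 t) :=
    fun x hx => (hderiv x hx).continuousAt.continuousWithinAt
  have hint : IntegrableOn (powLogWeightDeriv β k) (Ioc 0 t) :=
    intervalIntegral.integrableOn_deriv_of_nonneg hcont
      (fun x hx => hderiv x (Ioo_subset_Icc_self hx))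
      (fun x hx => powLogWeightDeriv_nonneg hβ hx.1.le (hx.2.trans ht.2))
  refine ⟨hint.mono_set Ioo_subset_Ioc_self, ?_⟩
  rw [← integral_Ioc_eq_integral_Ioo, ← intervalIntegral.integral_of_le ht.1,
    intervalIntegral.integral_eq_sub_of_hasDerivAt_of_le ht.1 hcont
      (fun x hx => hderiv x (Ioo_subset_Icc_self hx))
      ((intervalIntegrable_iff_integrableOn_Ioc_of_le ht.1).mpr hint)]
  simp

end powLogWeight

section Forward

variable {μ : Measure ℝ} {α β γ C : ℝ}

theorem setIntegral_pow_succ_mul_logWeight_rpow_le (hα : -1 < α) (hβ : -1 < β)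
    (hfin : μ (Ico 0 1) ≠ ∞)
    (htail : ∀ t ∈ Ico (0 : ℝ) 1,
      μ.real (Ico t 1) * logWeight t ^ (β + 1 - γ) ≤ C * (1 - t) ^ (α + 1))
    (k : ℕ) (hφint : IntegrableOn (fun t => t ^ (k + 1) * logWeight t ^ (β + 1)) (Ico 0 1) μ) :
    ∫ t in Ico 0 1, t ^ (k + 1) * logWeight t ^ (β + 1) ∂μ ≤
      C * ((k + 1) * ∫ s in Ioo 0 1, s ^ k * (1 - s) ^ (α + 1) * logWeight s ^ γ) +
        C * ((β + 1) * ∫ s in Ioo 0 1, s ^ k * (1 - s) ^ α * logWeight s ^ γ) := by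
  obtain ⟨_, _, hm₁⟩ := integral_pow_mul_one_sub_rpow_mul_logWeight_rpow_le
    (by linarith : -1 < α + 1) γ
  obtain ⟨_, _, hm₂⟩ := integral_pow_mul_one_sub_rpow_mul_logWeight_rpow_le hα γ
  have hint₁ := ((hm₁ k).1.const_mul ((k : ℝ) + 1)).const_mul C
  have hint₂ := ((hm₂ k).1.const_mul (β + 1)).const_mul C
  rw [← integral_const_mul, ← integral_const_mul, ← integral_const_mul, ← integral_const_mul,
    ← integral_add hint₁ hint₂]
  refine setIntegral_Ico_le_of_mul_measure_Ico_le hfin (by unfold powLogWeightDeriv; fun_prop)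
    (fun s hs => powLogWeightDeriv_nonneg hβ hs.1.le hs.2)
    (fun t ht => (integrableOn_powLogWeightDeriv_and_eq_integral hβ ht).1)
    (fun t ht => (integrableOn_powLogWeightDeriv_and_eq_integral hβ ht).2) hφint
    (hint₁.add hint₂) fun s hs => ?_
  have hs0 := hs.1.le
  have h1s : 0 < 1 - s := by linarith [hs.2]
  have hL := logWeight.pos hs0 hs.2
  have hLp : 0 < logWeight s ^ (β + 1 - γ) := Real.rpow_pos_of_pos hL _
  have hμ : μ.real (Ico s 1) ≤ C * (1 - s) ^ (α + 1) / logWeight s ^ (β + 1 - γ) :=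
    (le_div_iff₀ hLp).mpr (htail s ⟨hs0, hs.2⟩)
  have hbound0 : 0 ≤ C * (1 - s) ^ (α + 1) / logWeight s ^ (β + 1 - γ) :=
    measureReal_nonneg.trans hμ
  have hsplitL : logWeight s ^ (β + 1) = logWeight s ^ (β + 1 - γ) * logWeight s ^ γ := by
    rw [← Real.rpow_add hL]; ring_nf
  have hsplitU : (1 - s) ^ (α + 1) = (1 - s) ^ α * (1 - s) := Real.rpow_add_one h1s.ne' α
  calc powLogWeightDeriv β k s * μ.real (Ico s 1)
      ≤ powLogWeightDeriv β k s * (C * (1 - s) ^ (α + 1) / logWeight s ^ (β + 1 - γ)) :=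
        mul_le_mul_of_nonneg_left hμ (powLogWeightDeriv_nonneg hβ hs0 hs.2)
    _ ≤ s ^ k * logWeight s ^ (β + 1) * ((k + 1) + (β + 1) / (1 - s)) *
          (C * (1 - s) ^ (α + 1) / logWeight s ^ (β + 1 - γ)) :=
        mul_le_mul_of_nonneg_right (powLogWeightDeriv_le hβ hs0 hs.2) hbound0
    _ = C * ((k + 1) * (s ^ k * (1 - s) ^ (α + 1) * logWeight s ^ γ)) +
          C * ((β + 1) * (s ^ k * (1 - s) ^ α * logWeight s ^ γ)) := by
        rw [hsplitL, hsplitU]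
        field_simp

theorem exists_setIntegral_pow_succ_mul_logWeight_rpow_le (hα : -1 < α) (hβ : -1 < β)
    (hC : 0 ≤ C) (hfin : μ (Ico 0 1) ≠ ∞)
    (hφint : ∀ n : ℕ, IntegrableOn (fun t => t ^ n * logWeight t ^ (β + 1)) (Ico 0 1) μ)
    (htail : ∀ t ∈ Ico (0 : ℝ) 1,
      μ.real (Ico t 1) * logWeight t ^ (β + 1 - γ) ≤ C * (1 - t) ^ (α + 1)) :
    ∃ A ≥ 0, ∀ k : ℕ, ∫ t in Ico 0 1, t ^ (k + 1) * logWeight t ^ (β + 1) ∂μ ≤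
      A * (1 + Real.log (k + 1)) ^ γ / (k + 1) ^ (α + 1) := by
  obtain ⟨K₁, hK₁, hm₁⟩ := integral_pow_mul_one_sub_rpow_mul_logWeight_rpow_le
    (by linarith : -1 < α + 1) γ
  obtain ⟨K₂, hK₂, hm₂⟩ := integral_pow_mul_one_sub_rpow_mul_logWeight_rpow_le hα γ
  refine ⟨C * (K₁ + (β + 1) * K₂), mul_nonneg hC (by nlinarith), fun k => ?_⟩
  have hν0 : (0 : ℝ) < k + 1 := by positivity
  refine (setIntegral_pow_succ_mul_logWeight_rpow_le hα hβ hfin htail k (hφint _)).trans ?_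
  calc C * ((k + 1) * ∫ s in Ioo 0 1, s ^ k * (1 - s) ^ (α + 1) * logWeight s ^ γ) +
        C * ((β + 1) * ∫ s in Ioo 0 1, s ^ k * (1 - s) ^ α * logWeight s ^ γ)
      ≤ C * ((k + 1) * (K₁ * (1 + Real.log (k + 1)) ^ γ / (k + 1) ^ (α + 1 + 1))) +
        C * ((β + 1) * (K₂ * (1 + Real.log (k + 1)) ^ γ / (k + 1) ^ (α + 1))) := by
        gcongr
        · exact (hm₁ k).2
        · linarith
        · exact (hm₂ k).2
    _ = C * (K₁ + (β + 1) * K₂) * (1 + Real.log (k + 1)) ^ γ / (k + 1) ^ (α + 1) := by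
        rw [Real.rpow_add_one hν0.ne']
        field_simp

theorem exists_bound_of_measure_Ico_le (hα : -1 < α) (hβ : -1 < β) (hC : 0 ≤ C)
    (hfin : μ (Ico 0 1) ≠ ∞)
    (hφint : ∀ n : ℕ, IntegrableOn (fun t => t ^ n * logWeight t ^ (β + 1)) (Ico 0 1) μ)
    (htail : ∀ t ∈ Ico (0 : ℝ) 1,
      μ.real (Ico t 1) * logWeight t ^ (β + 1 - γ) ≤ C * (1 - t) ^ (α + 1)) :
    ∃ M : ℝ, ∀ n : ℕ, 1 ≤ n →
      (n : ℝ) ^ (α + 1) * Real.log ((n : ℝ) + 1) ^ (-γ) *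
        ∫ t in Ico 0 1, t ^ n * logWeight t ^ (β + 1) ∂μ ≤ M := by
  obtain ⟨A, hA, hI⟩ := exists_setIntegral_pow_succ_mul_logWeight_rpow_le hα hβ hC hfin hφint htail
  refine ⟨A * 3 ^ |γ|, fun n hn => ?_⟩
  obtain ⟨k, rfl⟩ := Nat.exists_eq_add_of_le' hn
  have hν : (1 : ℝ) ≤ k + 1 := by simp
  have hlog : 0 < Real.log ((k : ℝ) + 1 + 1) := Real.log_pos (by linarith)
  have hcmp : (1 + Real.log (k + 1)) ^ γ * Real.log ((k : ℝ) + 1 + 1) ^ (-γ) ≤ 3 ^ |γ| := by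
    rw [Real.rpow_neg hlog.le, ← div_eq_mul_inv, div_le_iff₀ (Real.rpow_pos_of_pos hlog γ)]
    exact one_add_log_rpow_le_mul_log_add_one_rpow hν le_rfl (by linarith) γ
  push_cast
  calc ((k : ℝ) + 1) ^ (α + 1) * Real.log ((k : ℝ) + 1 + 1) ^ (-γ) *
        ∫ t in Ico 0 1, t ^ (k + 1) * logWeight t ^ (β + 1) ∂μ
      ≤ ((k : ℝ) + 1) ^ (α + 1) * Real.log ((k : ℝ) + 1 + 1) ^ (-γ) *
          (A * (1 + Real.log (k + 1)) ^ γ / (k + 1) ^ (α + 1)) := by gcongr; exact hI k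
    _ = A * ((1 + Real.log (k + 1)) ^ γ * Real.log ((k : ℝ) + 1 + 1) ^ (-γ)) := by field_simp
    _ ≤ A * 3 ^ |γ| := mul_le_mul_of_nonneg_left hcmp hA

end Forward

theorem mul_measureReal_Ico_le_setIntegral {μ : Measure ℝ} {a b t : ℝ} {φ : ℝ → ℝ}
    (hφ : MonotoneOn φ (Ico a b)) (hφ0 : ∀ x ∈ Ico a b, 0 ≤ φ x)
    (hint : IntegrableOn φ (Ico a b) μ) (hfin : μ (Ico a b) ≠ ∞) (ht : t ∈ Ico a b) :
    φ t * μ.real (Ico t b) ≤ ∫ x in Ico a b, φ x ∂μ := by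
  have hsub : Ico t b ⊆ Ico a b := Ico_subset_Ico_left ht.1
  calc φ t * μ.real (Ico t b) = μ.real (Ico t b) • φ t := mul_comm _ _
    _ ≤ ∫ x in Ico t b, φ x ∂μ :=
        setIntegral_ge_of_const_le measurableSet_Ico (ne_top_of_le_ne_top hfin (measure_mono hsub))
          (fun x hx => hφ ht (hsub hx) hx.1) (hint.mono_set hsub)
    _ ≤ ∫ x in Ico a b, φ x ∂μ :=
        setIntegral_mono_set hint ((ae_restrict_mem measurableSet_Ico).mono hφ0) hsub.eventuallyLE

theorem inv_pow_le_exp_four {t : ℝ} (ht : 1 / 2 ≤ t) (ht1 : t < 1) {n : ℕ}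
    (hn : n * (1 - t) ≤ 2) : (t ^ n)⁻¹ ≤ Real.exp 4 := by
  have ht0 : 0 < t := by linarith
  have hinv : t⁻¹ ≤ 1 + 2 * (1 - t) := by rw [inv_le_iff_one_le_mul₀ ht0]; nlinarith
  have hlog : -(2 * (1 - t)) ≤ Real.log t := by linarith [Real.one_sub_inv_le_log_of_pos ht0]
  rw [← Real.exp_log (inv_pos.mpr (pow_pos ht0 n)), Real.log_inv, Real.log_pow]
  exact Real.exp_le_exp.mpr (by nlinarith)

theorem monotoneOn_pow_mul_logWeight_rpow {β : ℝ} (hβ : -1 < β) (n : ℕ) :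
    MonotoneOn (fun t => t ^ n * logWeight t ^ (β + 1)) (Ico 0 1) := fun x hx y hy hxy =>
  mul_le_mul (pow_le_pow_left₀ hx.1 hxy n)
    (Real.rpow_le_rpow (logWeight.pos hx.1 hx.2).le (logWeight.monotoneOn hx.2 hy.2 hxy)
      (by linarith))
    (Real.rpow_nonneg (logWeight.pos hx.1 hx.2).le _) (pow_nonneg (hx.1.trans hxy) n)

section Backward

variable {μ : Measure ℝ} {α β γ M : ℝ}

theorem measureReal_Ico_mul_logWeight_rpow_le_of_lt_half (hα : -1 < α) (hfin : μ (Ico 0 1) ≠ ∞)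
    {t : ℝ} (ht0 : 0 ≤ t) (ht : t < 1 / 2) (δ : ℝ) :
    μ.real (Ico t 1) * logWeight t ^ δ ≤
      μ.real (Ico 0 1) * 2 ^ |δ| * 2 ^ (α + 1) * (1 - t) ^ (α + 1) := by
  have h1t : 0 < 1 - t := by linarith
  have hL := logWeight.one_le ht0 (by linarith)
  have hL2 : logWeight t ≤ 2 := by
    have : (1 - t)⁻¹ ≤ 2 := by rw [inv_le_comm₀ h1t two_pos]; linarith
    rw [logWeight.eq_one_add_log_inv (by linarith)]
    linarith [Real.log_le_sub_one_of_pos (inv_pos.mpr h1t)]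
  have hLδ : logWeight t ^ δ ≤ 2 ^ |δ| := by
    simpa using rpow_le_mul_rpow_of_le_mul (by linarith) one_pos (by linarith) (by linarith) δ
  have hone : 1 ≤ 2 ^ (α + 1) * (1 - t) ^ (α + 1) := by
    rw [← Real.mul_rpow two_pos.le h1t.le]
    exact Real.one_le_rpow (by linarith) (by linarith)
  calc μ.real (Ico t 1) * logWeight t ^ δ ≤ μ.real (Ico 0 1) * 2 ^ |δ| * 1 := by
        rw [mul_one]
        exact mul_le_mul (measureReal_mono (Ico_subset_Ico_left ht0) hfin) hLδ
          (Real.rpow_nonneg (by linarith) δ) measureReal_nonneg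
    _ ≤ μ.real (Ico 0 1) * 2 ^ |δ| * (2 ^ (α + 1) * (1 - t) ^ (α + 1)) := by gcongr
    _ = _ := by ring

theorem measureReal_Ico_mul_logWeight_rpow_le_of_half_le (hα : -1 < α) (hβ : -1 < β)
    (hfin : μ (Ico 0 1) ≠ ∞) {n : ℕ}
    (hφint : IntegrableOn (fun t => t ^ n * logWeight t ^ (β + 1)) (Ico 0 1) μ)
    (hMn : (n : ℝ) ^ (α + 1) * Real.log ((n : ℝ) + 1) ^ (-γ) *
        ∫ t in Ico 0 1, t ^ n * logWeight t ^ (β + 1) ∂μ ≤ M)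
    {t : ℝ} (ht : 1 / 2 ≤ t) (ht1 : t < 1) (hxn : (1 - t)⁻¹ ≤ n) (hnx : (n : ℝ) ≤ 2 * (1 - t)⁻¹) :
    μ.real (Ico t 1) * logWeight t ^ (β + 1 - γ) ≤
      Real.exp 4 * 3 ^ |γ| * M * (1 - t) ^ (α + 1) := by
  have hu0 : 0 < 1 - t := by linarith
  have hx : 1 ≤ (1 - t)⁻¹ := by rw [le_inv_comm₀ one_pos hu0]; linarith
  have hn0 : (0 : ℝ) < n := by linarith
  have hL := logWeight.pos (by linarith) ht1
  have hcmp : logWeight t ^ (-γ) ≤ 3 ^ |γ| * Real.log ((n : ℝ) + 1) ^ (-γ) := by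
    rw [logWeight.eq_one_add_log_inv ht1, ← abs_neg γ]
    exact one_add_log_rpow_le_mul_log_add_one_rpow hx hxn hnx (-γ)
  have htn : (t ^ n)⁻¹ ≤ Real.exp 4 :=
    inv_pow_le_exp_four ht ht1 (by rwa [← le_div_iff₀ hu0, div_eq_mul_inv])
  have hnα : ((n : ℝ) ^ (α + 1))⁻¹ ≤ (1 - t) ^ (α + 1) := by
    rw [inv_le_comm₀ (Real.rpow_pos_of_pos hn0 _) (Real.rpow_pos_of_pos hu0 _),
      ← Real.inv_rpow hu0.le]
    exact Real.rpow_le_rpow (by positivity) hxn (by linarith)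
  set P := (n : ℝ) ^ (α + 1) * Real.log ((n : ℝ) + 1) ^ (-γ)
  have hP : 0 < P := by have := Real.log_pos (by linarith : (1 : ℝ) < n + 1); positivity
  have hX : P * (t ^ n * logWeight t ^ (β + 1) * μ.real (Ico t 1)) ≤ M :=
    (mul_le_mul_of_nonneg_left (mul_measureReal_Ico_le_setIntegral
      (monotoneOn_pow_mul_logWeight_rpow hβ n)
      (fun y hy => mul_nonneg (pow_nonneg hy.1 n) (Real.rpow_nonneg (logWeight.pos hy.1 hy.2).le _))
      hφint hfin ⟨by linarith, ht1⟩) hP.le).trans hMn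
  have hM0 : 0 ≤ M := (mul_nonneg hP.le (mul_nonneg (mul_nonneg (pow_nonneg (by linarith) n)
    (Real.rpow_nonneg hL.le _)) measureReal_nonneg)).trans hX
  calc μ.real (Ico t 1) * logWeight t ^ (β + 1 - γ)
      = μ.real (Ico t 1) * logWeight t ^ (β + 1) * logWeight t ^ (-γ) := by
        rw [sub_eq_add_neg, Real.rpow_add hL, mul_assoc]
    _ ≤ μ.real (Ico t 1) * logWeight t ^ (β + 1) *
          (3 ^ |γ| * Real.log ((n : ℝ) + 1) ^ (-γ)) :=
        mul_le_mul_of_nonneg_left hcmp (mul_nonneg measureReal_nonneg (Real.rpow_nonneg hL.le _))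
    _ = 3 ^ |γ| * (t ^ n)⁻¹ * ((n : ℝ) ^ (α + 1))⁻¹ *
          (P * (t ^ n * logWeight t ^ (β + 1) * μ.real (Ico t 1))) := by
        simp only [P]
        field_simp
    _ ≤ 3 ^ |γ| * Real.exp 4 * (1 - t) ^ (α + 1) * M := by gcongr
    _ = Real.exp 4 * 3 ^ |γ| * M * (1 - t) ^ (α + 1) := by ring

theorem exists_measure_Ico_le_of_bound (hα : -1 < α) (hβ : -1 < β) (hfin : μ (Ico 0 1) ≠ ∞)
    (hφint : ∀ n : ℕ, IntegrableOn (fun t => t ^ n * logWeight t ^ (β + 1)) (Ico 0 1) μ)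
    (hM : ∀ n : ℕ, 1 ≤ n →
      (n : ℝ) ^ (α + 1) * Real.log ((n : ℝ) + 1) ^ (-γ) *
        ∫ t in Ico 0 1, t ^ n * logWeight t ^ (β + 1) ∂μ ≤ M) :
    ∃ C > 0, ∀ t ∈ Ico (0 : ℝ) 1,
      μ.real (Ico t 1) * logWeight t ^ (β + 1 - γ) ≤ C * (1 - t) ^ (α + 1) := by
  set A := Real.exp 4 * 3 ^ |γ| * M
  set B := μ.real (Ico 0 1) * 2 ^ |β + 1 - γ| * 2 ^ (α + 1)
  have hB : 0 ≤ B := by positivity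
  refine ⟨max A B + 1, by positivity, fun t ht => ?_⟩
  have h1t : 0 ≤ (1 - t) ^ (α + 1) := Real.rpow_nonneg (by linarith [ht.2]) _
  rcases lt_or_ge t (1 / 2) with h | h
  · refine (measureReal_Ico_mul_logWeight_rpow_le_of_lt_half hα hfin ht.1 h _).trans ?_
    exact mul_le_mul_of_nonneg_right (by linarith [le_max_right A B]) h1t
  · have hx : 1 ≤ (1 - t)⁻¹ := by rw [le_inv_comm₀ one_pos (by linarith [ht.2])]; linarith
    set n := ⌈(1 - t)⁻¹⌉₊
    have hxn : (1 - t)⁻¹ ≤ n := Nat.le_ceil _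
    have hnx : (n : ℝ) ≤ 2 * (1 - t)⁻¹ := by linarith [Nat.ceil_lt_add_one (by linarith : 0 ≤ (1 - t)⁻¹)]
    have hn : 1 ≤ n := by exact_mod_cast hx.trans hxn
    refine (measureReal_Ico_mul_logWeight_rpow_le_of_half_le hα hβ hfin (hφint n) (hM n hn) h ht.2
      hxn hnx).trans ?_
    exact mul_le_mul_of_nonneg_right (by linarith [le_max_left A B]) h1t

end Backward

section Integrability

variable {μ : Measure ℝ} {β : ℝ}

theorem measure_Ico_ne_top_of_integrableOn (hβ : -1 < β)
    (hμ : IntegrableOn (fun t => logWeight t ^ β / (1 - t)) (Ico 0 1) μ) : μ (Ico 0 1) ≠ ∞ := by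
  have h1 : IntegrableOn (fun _ => (1 : ℝ)) (Ico 0 1) μ := by
    refine hμ.mono' aestronglyMeasurable_const ((ae_restrict_mem measurableSet_Ico).mono ?_)
    intro t ht
    rw [norm_one]
    exact (logWeight.one_le_rpow (by linarith) ht.1 ht.2).trans
      (logWeight.rpow_add_one_le ht.1 ht.2)
  exact ((integrableOn_const_iff (by simp)).mp h1).resolve_left (by simp) |>.ne

theorem integrableOn_pow_mul_logWeight_rpow
    (hμ : IntegrableOn (fun t => logWeight t ^ β / (1 - t)) (Ico 0 1) μ) (n : ℕ) :
    IntegrableOn (fun t => t ^ n * logWeight t ^ (β + 1)) (Ico 0 1) μ := by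
  refine hμ.mono' (by fun_prop : Measurable _).aestronglyMeasurable
    ((ae_restrict_mem measurableSet_Ico).mono fun t ht => ?_)
  have hL := (logWeight.pos ht.1 ht.2).le
  rw [Real.norm_of_nonneg (mul_nonneg (pow_nonneg ht.1 n) (Real.rpow_nonneg hL _))]
  calc t ^ n * logWeight t ^ (β + 1) ≤ 1 * logWeight t ^ (β + 1) :=
        mul_le_mul_of_nonneg_right (pow_le_one₀ ht.1 ht.2.le) (Real.rpow_nonneg hL _)
    _ ≤ logWeight t ^ β / (1 - t) := by rw [one_mul]; exact logWeight.rpow_add_one_le ht.1 ht.2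

end Integrability

theorem stmt19 (μ : Measure ℝ) (α β γ : ℝ) (hα : -1 < α) (hβ : -1 < β)
    (hμ : Integrable (fun t => Real.log (Real.exp 1 / (1 - t)) ^ β / (1 - t))
      (μ.restrict (Ico 0 1))) :
    (∃ C > 0, ∀ t ∈ Ico (0:ℝ) 1,
        (μ (Ico t 1)).toReal * Real.log (Real.exp 1 / (1 - t)) ^ (β + 1 - γ) ≤
          C * (1 - t) ^ (α + 1))
    ↔ (∃ M : ℝ, ∀ n : ℕ, 1 ≤ n →
        (n : ℝ) ^ (α + 1) * Real.log ((n : ℝ) + 1) ^ (-γ) *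
          ∫ t in Ico (0:ℝ) 1, t ^ n * Real.log (Real.exp 1 / (1 - t)) ^ (β + 1) ∂μ ≤ M) := by
  have hfin := measure_Ico_ne_top_of_integrableOn hβ hμ
  have hφint := integrableOn_pow_mul_logWeight_rpow hμ
  constructor
  · rintro ⟨C, hC, htail⟩
    exact exists_bound_of_measure_Ico_le hα hβ hC.le hfin hφint htail
  · rintro ⟨M, hM⟩
    exact exists_measure_Ico_le_of_bound hα hβ hfin hφint hM
end
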